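/- arXiv:1804.01313 — 7 statements merged into one kernel-verified Lean document; each statement's English description precedes it below -/
import Mathlib

section
/- For every r > 0, h(r) - h(b) → 0 as b → ∞ and for all 0 < a < b ≤ ∞ one has h(b) - h(a) = -∫_a^b 2 K(r) r^{-1} dr; in particular h(a) = ∫_a^∞ 2 K(r)/r dr when the right side is finite. -/
open MeasureTheory ENNReal Filter Set

noncomputable def hfun (d : ℕ) (ν : ℝ → ℝ≥0∞) (r : ℝ) : ℝ≥0∞ :=
  ∫⁻ x : EuclideanSpace ℝ (Fin d), min 1 (ENNReal.ofReal (‖x‖ ^ 2 / r ^ 2)) * ν ‖x‖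

noncomputable def Kfun (d : ℕ) (ν : ℝ → ℝ≥0∞) (r : ℝ) : ℝ≥0∞ :=
  (ENNReal.ofReal (r ^ 2))⁻¹ *
    ∫⁻ x in {x : EuclideanSpace ℝ (Fin d) | ‖x‖ < r}, ENNReal.ofReal (‖x‖ ^ 2) * ν ‖x‖


lemma rpow_neg3 (r : ℝ) (hr0 : 0 < r) : 2 * r ^ (-3 : ℝ) = 2 / r ^ 3 := by
  rw [Real.rpow_neg hr0.le, show (3:ℝ) = ((3:ℕ):ℝ) from by norm_num, Real.rpow_natCast]
  ring

lemma aux_rint_Ioi (c : ℝ) (hc : 0 < c) :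
    ∫⁻ r in Ioi c, ENNReal.ofReal (2 / r ^ 3) = ENNReal.ofReal (1 / c ^ 2) := by
  have hint : IntegrableOn (fun r : ℝ => 2 / r ^ 3) (Ioi c) := by
    have h2 : IntegrableOn (fun r : ℝ => 2 * r ^ (-3 : ℝ)) (Ioi c) :=
      (integrableOn_Ioi_rpow_of_lt (by norm_num : (-3:ℝ) < -1) hc).const_mul 2
    exact h2.congr_fun (fun r hr => rpow_neg3 r (hc.trans hr)) measurableSet_Ioi
  have hnn : 0 ≤ᵐ[volume.restrict (Ioi c)] fun r : ℝ => 2 / r ^ 3 := by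
    filter_upwards [ae_restrict_mem measurableSet_Ioi] with r hr
    have hr0 : 0 < r := hc.trans hr
    positivity
  rw [← ofReal_integral_eq_lintegral_ofReal hint hnn]
  congr 1
  have : ∫ r in Ioi c, 2 / r ^ 3 = ∫ r in Ioi c, 2 * r ^ (-3 : ℝ) := by
    refine setIntegral_congr_fun measurableSet_Ioi (fun r hr => ?_)
    exact (rpow_neg3 r (hc.trans hr)).symm
  rw [this, integral_const_mul, integral_Ioi_rpow_of_lt (by norm_num) hc]
  rw [show (-3 : ℝ) + 1 = -2 by norm_num, Real.rpow_neg hc.le,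
    show (2:ℝ) = ((2:ℕ):ℝ) from by norm_num, Real.rpow_natCast]
  field_simp

lemma aux_rint_Ioc (c b : ℝ) (hc : 0 < c) (hcb : c ≤ b) :
    ∫⁻ r in Ioc c b, ENNReal.ofReal (2 / r ^ 3)
      = ENNReal.ofReal (1 / c ^ 2 - 1 / b ^ 2) := by
  have hb : 0 < b := hc.trans_le hcb
  have hint : IntegrableOn (fun r : ℝ => 2 / r ^ 3) (Ioc c b) := by
    have hcont : ContinuousOn (fun r : ℝ => 2 / r ^ 3) (Icc c b) := by
      refine ContinuousOn.div continuousOn_const (continuous_pow 3).continuousOn ?_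
      intro r hr
      exact pow_ne_zero _ (hc.trans_le hr.1).ne'
    exact (hcont.integrableOn_Icc).mono_set Ioc_subset_Icc_self
  have hnn : 0 ≤ᵐ[volume.restrict (Ioc c b)] fun r : ℝ => 2 / r ^ 3 := by
    filter_upwards [ae_restrict_mem measurableSet_Ioc] with r hr
    have hr0 : 0 < r := hc.trans hr.1
    positivity
  rw [← ofReal_integral_eq_lintegral_ofReal hint hnn]
  congr 1
  rw [← intervalIntegral.integral_of_le hcb]
  have : ∫ r in c..b, 2 / r ^ 3 = ∫ r in c..b, 2 * r ^ (-3 : ℤ) := by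
    refine intervalIntegral.integral_congr (fun r hr => ?_)
    rw [uIcc_of_le hcb] at hr
    have hr0 : 0 < r := hc.trans_le hr.1
    rw [zpow_neg, show ((3:ℤ) = ((3:ℕ):ℤ)) from rfl, zpow_natCast]
    ring
  rw [this, intervalIntegral.integral_const_mul,
    integral_zpow (Or.inr ⟨by norm_num, by
      rw [uIcc_of_le hcb]; exact fun h => absurd h.1 (not_le.mpr hc)⟩)]
  rw [show (-3+1 : ℤ) = -2 from rfl, zpow_neg, zpow_neg,
    show ((2:ℤ) = ((2:ℕ):ℤ)) from rfl, zpow_natCast, zpow_natCast]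
  have hc2 : (c:ℝ) ^ 2 ≠ 0 := pow_ne_zero _ hc.ne'
  have hb2 : (b:ℝ) ^ 2 ≠ 0 := pow_ne_zero _ hb.ne'
  field_simp
  ring

lemma pt3 (a t : ℝ) (ha : 0 < a) (ht : 0 ≤ t) :
    ENNReal.ofReal (1 / (max a t) ^ 2) * ENNReal.ofReal (t ^ 2)
      = min 1 (ENNReal.ofReal (t ^ 2 / a ^ 2)) := by
  rw [← ENNReal.ofReal_mul (by positivity)]
  rcases le_total a t with h | h
  · have ht0 : 0 < t := ha.trans_le h
    rw [max_eq_right h, min_eq_left]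
    · rw [show 1 / t ^ 2 * t ^ 2 = 1 from by field_simp, ENNReal.ofReal_one]
    · rw [ENNReal.one_le_ofReal]
      rw [le_div_iff₀ (by positivity), one_mul]
      exact pow_le_pow_left₀ ha.le h 2
  · rw [max_eq_left h, min_eq_right]
    · congr 1; field_simp
    · rw [ENNReal.ofReal_le_one, div_le_one (by positivity)]
      exact pow_le_pow_left₀ ht h 2

lemma pt2 (a b t : ℝ) (ha : 0 < a) (hab : a < b) (ht : 0 ≤ t) :
    min 1 (ENNReal.ofReal (t ^ 2 / a ^ 2))
      = min 1 (ENNReal.ofReal (t ^ 2 / b ^ 2)) +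
        (if t < b then
          ENNReal.ofReal (1 / (max a t) ^ 2 - 1 / b ^ 2) * ENNReal.ofReal (t ^ 2)
        else 0) := by
  have hb : 0 < b := ha.trans hab
  rcases lt_or_ge t b with htb | htb
  · rw [if_pos htb]
    have hmaxpos : 0 < max a t := lt_max_of_lt_left ha
    have hmaxlt : max a t < b := max_lt hab htb
    have hsub : 0 ≤ 1 / (max a t) ^ 2 - 1 / b ^ 2 := by
      rw [sub_nonneg]
      apply one_div_le_one_div_of_le (by positivity)
      exact pow_le_pow_left₀ hmaxpos.le hmaxlt.le 2
    rw [← ENNReal.ofReal_mul hsub]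
    rcases le_total a t with h | h
    · have ht0 : 0 < t := ha.trans_le h
      rw [max_eq_right h] at *
      rw [min_eq_left, min_eq_right, ← ENNReal.ofReal_add (by positivity) (by positivity)]
      · rw [show t ^ 2 / b ^ 2 + (1 / t ^ 2 - 1 / b ^ 2) * t ^ 2 = 1 from by field_simp; ring,
          ENNReal.ofReal_one]
      · rw [ENNReal.ofReal_le_one, div_le_one (by positivity)]
        exact pow_le_pow_left₀ ht htb.le 2
      · rw [ENNReal.one_le_ofReal, le_div_iff₀ (by positivity), one_mul]
        exact pow_le_pow_left₀ ha.le h 2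
    · rw [max_eq_left h] at *
      rw [min_eq_right, min_eq_right, ← ENNReal.ofReal_add (by positivity) (by positivity)]
      · congr 1; field_simp; ring
      · rw [ENNReal.ofReal_le_one, div_le_one (by positivity)]
        exact pow_le_pow_left₀ ht htb.le 2
      · rw [ENNReal.ofReal_le_one, div_le_one (by positivity)]
        exact pow_le_pow_left₀ ht h 2
  · rw [if_neg (not_lt.mpr htb), add_zero]
    have h1 : ∀ c : ℝ, 0 < c → c ≤ t → min 1 (ENNReal.ofReal (t ^ 2 / c ^ 2)) = 1 := by
      intro c hc hct
      rw [min_eq_left]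
      rw [ENNReal.one_le_ofReal, le_div_iff₀ (by positivity), one_mul]
      exact pow_le_pow_left₀ hc.le hct 2
    rw [h1 a ha (hab.le.trans htb), h1 b hb htb]

lemma swap_lemma (d : ℕ) (ν : ℝ → ℝ≥0∞) (hν_meas : Measurable ν)
    (S : Set ℝ) (hS : MeasurableSet S) (hSpos : S ⊆ Ioi 0) :
    ∫⁻ r in S, 2 * Kfun d ν r / ENNReal.ofReal r
      = ∫⁻ x : EuclideanSpace ℝ (Fin d),
          (∫⁻ r in S ∩ Ioi ‖x‖, ENNReal.ofReal (2 / r ^ 3))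
            * (ENNReal.ofReal (‖x‖ ^ 2) * ν ‖x‖) := by
  set E := EuclideanSpace ℝ (Fin d)
  set G : ℝ × E → ℝ≥0∞ := fun p =>
    ({q : ℝ × E | ‖q.2‖ < q.1}).indicator
      (fun q => ENNReal.ofReal (2 / q.1 ^ 3) * (ENNReal.ofReal (‖q.2‖ ^ 2) * ν ‖q.2‖)) p
    with hG
  have hsetmeas : MeasurableSet {q : ℝ × E | ‖q.2‖ < q.1} :=
    measurableSet_lt (measurable_norm.comp measurable_snd) measurable_fst
  have hfmeas : Measurable fun q : ℝ × E =>
      ENNReal.ofReal (2 / q.1 ^ 3) * (ENNReal.ofReal (‖q.2‖ ^ 2) * ν ‖q.2‖) := by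
    apply Measurable.mul
    · exact (measurable_const.div ((measurable_fst.pow_const 3))).ennreal_ofReal
    · exact (((measurable_norm.comp measurable_snd).pow_const 2).ennreal_ofReal).mul
        (hν_meas.comp (measurable_norm.comp measurable_snd))
  have hGmeas : Measurable G := hfmeas.indicator hsetmeas
  have step1 : ∀ r ∈ S, 2 * Kfun d ν r / ENNReal.ofReal r = ∫⁻ x : E, G (r, x) := by
    intro r hr
    have hr0 : (0:ℝ) < r := hSpos hr
    have h1 : ∀ x : E, G (r, x)
        = ({x : E | ‖x‖ < r}).indicator
            (fun x => ENNReal.ofReal (2 / r ^ 3) * (ENNReal.ofReal (‖x‖ ^ 2) * ν ‖x‖)) x := by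
      intro x
      by_cases h : ‖x‖ < r <;> simp [hG, Set.indicator_apply, h]
    rw [lintegral_congr h1, lintegral_indicator
      (measurableSet_lt measurable_norm measurable_const) _,
      lintegral_const_mul _ (show Measurable fun x : E => ENNReal.ofReal (‖x‖ ^ 2) * ν ‖x‖ from
        (((measurable_norm).pow_const 2).ennreal_ofReal).mul (hν_meas.comp measurable_norm))]
    rw [Kfun, div_eq_mul_inv]
    have h2 : ENNReal.ofReal (2 / r ^ 3)
        = 2 * (ENNReal.ofReal (r ^ 2))⁻¹ * (ENNReal.ofReal r)⁻¹ := by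
      rw [← ENNReal.ofReal_inv_of_pos (by positivity : (0:ℝ) < r ^ 2),
        ← ENNReal.ofReal_inv_of_pos hr0,
        show (2 : ℝ≥0∞) = ENNReal.ofReal 2 from (ENNReal.ofReal_ofNat 2).symm,
        ← ENNReal.ofReal_mul (by norm_num), ← ENNReal.ofReal_mul (by positivity)]
      congr 1
      field_simp
    rw [h2]
    ring
  rw [setLIntegral_congr_fun hS step1]
  rw [lintegral_lintegral_swap hGmeas.aemeasurable]
  refine lintegral_congr fun x => ?_
  have h3 : ∀ r : ℝ, G (r, x)
      = (Ioi ‖x‖).indicator (fun r => ENNReal.ofReal (2 / r ^ 3)) r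
          * (ENNReal.ofReal (‖x‖ ^ 2) * ν ‖x‖) := by
    intro r
    by_cases h : ‖x‖ < r <;> simp [hG, Set.indicator_apply, h, Set.mem_Ioi]
  rw [lintegral_congr h3,
    lintegral_mul_const _ (show Measurable ((Ioi ‖x‖).indicator fun r : ℝ => ENNReal.ofReal (2 / r ^ 3)) from
      (measurable_const.div ((measurable_id.pow_const 3 : Measurable fun r : ℝ => r ^ 3))).ennreal_ofReal.indicator
      measurableSet_Ioi),
    lintegral_indicator measurableSet_Ioi _, Measure.restrict_restrict measurableSet_Ioi,
    inter_comm]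

lemma min_bound (b t : ℝ) (hb : 0 < b) (ht : 0 ≤ t) :
    min 1 (ENNReal.ofReal (t ^ 2 / b ^ 2))
      ≤ ENNReal.ofReal (max 1 (1 / b ^ 2)) * min 1 (ENNReal.ofReal (t ^ 2)) := by
  rcases le_total (t ^ 2) 1 with h | h
  · rw [min_eq_right (ENNReal.ofReal_le_one.mpr h), ← ENNReal.ofReal_mul (by positivity)]
    refine (min_le_right _ _).trans (ENNReal.ofReal_le_ofReal ?_)
    rw [div_eq_mul_one_div]
    calc t ^ 2 * (1 / b ^ 2) ≤ t ^ 2 * max 1 (1 / b ^ 2) := by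
          exact mul_le_mul_of_nonneg_left (le_max_right _ _) (by positivity)
      _ = max 1 (1 / b ^ 2) * t ^ 2 := by ring
  · rw [min_eq_left (ENNReal.one_le_ofReal.mpr h)]
    calc min 1 (ENNReal.ofReal (t ^ 2 / b ^ 2)) ≤ 1 := min_le_left _ _
      _ = ENNReal.ofReal 1 * 1 := by simp
      _ ≤ ENNReal.ofReal (max 1 (1 / b ^ 2)) * 1 :=
          mul_le_mul_left (ENNReal.ofReal_le_ofReal (le_max_left _ _)) _
  
lemma hfun_ne_top (d : ℕ) (ν : ℝ → ℝ≥0∞)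
    (hν_int : (∫⁻ x : EuclideanSpace ℝ (Fin d),
      min 1 (ENNReal.ofReal (‖x‖ ^ 2)) * ν ‖x‖) ≠ ⊤)
    (b : ℝ) (hb : 0 < b) : hfun d ν b ≠ ⊤ := by
  have hle : hfun d ν b ≤ ENNReal.ofReal (max 1 (1 / b ^ 2)) *
      ∫⁻ x : EuclideanSpace ℝ (Fin d), min 1 (ENNReal.ofReal (‖x‖ ^ 2)) * ν ‖x‖ := by
    rw [← lintegral_const_mul' _ _ ENNReal.ofReal_ne_top]
    refine lintegral_mono fun x => ?_
    calc min 1 (ENNReal.ofReal (‖x‖ ^ 2 / b ^ 2)) * ν ‖x‖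
        ≤ (ENNReal.ofReal (max 1 (1 / b ^ 2)) * min 1 (ENNReal.ofReal (‖x‖ ^ 2))) * ν ‖x‖ :=
          mul_le_mul_left (min_bound b ‖x‖ hb (norm_nonneg x)) _
      _ = ENNReal.ofReal (max 1 (1 / b ^ 2)) * (min 1 (ENNReal.ofReal (‖x‖ ^ 2)) * ν ‖x‖) := by
          ring
  exact ne_top_of_le_ne_top (ENNReal.mul_ne_top ENNReal.ofReal_ne_top hν_int) hle

theorem stmt0 (d : ℕ) (hd : 0 < d) (ν : ℝ → ℝ≥0∞)
    (hν_meas : Measurable ν) (hν_mono : AntitoneOn ν (Set.Ici 0))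
    (hν_int : (∫⁻ x : EuclideanSpace ℝ (Fin d),
      min 1 (ENNReal.ofReal (‖x‖ ^ 2)) * ν ‖x‖) ≠ ⊤)
 :
    Tendsto (hfun d ν) atTop (nhds 0) ∧
    (∀ a b : ℝ, 0 < a → a < b →
      hfun d ν a - hfun d ν b
        = ∫⁻ r in Set.Ioc a b, 2 * Kfun d ν r / ENNReal.ofReal r) ∧
    (∀ a : ℝ, 0 < a →
      (∫⁻ r in Set.Ioi a, 2 * Kfun d ν r / ENNReal.ofReal r) ≠ ⊤ →
      hfun d ν a = ∫⁻ r in Set.Ioi a, 2 * Kfun d ν r / ENNReal.ofReal r) := by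
  have hmeas_min : ∀ c : ℝ, Measurable fun x : EuclideanSpace ℝ (Fin d) =>
      min 1 (ENNReal.ofReal (‖x‖ ^ 2 / c ^ 2)) * ν ‖x‖ := by
    intro c
    exact (measurable_const.min ((measurable_norm.pow_const 2).div_const
      _).ennreal_ofReal).mul (hν_meas.comp measurable_norm)
  refine ⟨?_, ?_, ?_⟩
  · -- Tendsto
    have hDC := tendsto_lintegral_filter_of_dominated_convergence
      (μ := (volume : Measure (EuclideanSpace ℝ (Fin d)))) (l := (atTop : Filter ℝ))
      (F := fun b x => min 1 (ENNReal.ofReal (‖x‖ ^ 2 / b ^ 2)) * ν ‖x‖)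
      (f := fun _ => 0)
      (fun x => min 1 (ENNReal.ofReal (‖x‖ ^ 2)) * ν ‖x‖)
      (Eventually.of_forall hmeas_min)
      ?_ hν_int ?_
    · rw [lintegral_zero] at hDC
      exact hDC
    · filter_upwards [eventually_ge_atTop (1:ℝ)] with b hb
      refine ae_of_all _ fun x => ?_
      refine mul_le_mul_left (min_le_min le_rfl (ENNReal.ofReal_le_ofReal ?_)) _
      calc ‖x‖ ^ 2 / b ^ 2 ≤ ‖x‖ ^ 2 / 1 ^ 2 := by
            apply div_le_div_of_nonneg_left (by positivity) (by norm_num)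
            · exact pow_le_pow_left₀ (by norm_num) hb 2
        _ = ‖x‖ ^ 2 := by norm_num
    · have hbm : Measurable fun x : EuclideanSpace ℝ (Fin d) =>
          min 1 (ENNReal.ofReal (‖x‖ ^ 2)) * ν ‖x‖ :=
        (measurable_const.min ((measurable_norm.pow_const
          2).ennreal_ofReal)).mul (hν_meas.comp measurable_norm)
      filter_upwards [ae_lt_top hbm hν_int] with x hx
      by_cases hx0 : ‖x‖ = 0
      · have : ∀ b : ℝ, min 1 (ENNReal.ofReal (‖x‖ ^ 2 / b ^ 2)) * ν ‖x‖ = 0 := by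
          intro b
          simp [hx0]
        simp only [this]
        exact tendsto_const_nhds
      · have hxpos : 0 < ‖x‖ := lt_of_le_of_ne (norm_nonneg x) (Ne.symm hx0)
        have hνx : ν ‖x‖ ≠ ⊤ := by
          intro h
          rw [h, ENNReal.mul_top] at hx
          · exact lt_irrefl _ hx
          · refine ne_of_gt (lt_min one_pos (ENNReal.ofReal_pos.mpr (by positivity)))
        refine tendsto_of_tendsto_of_tendsto_of_le_of_le (g := fun _ => (0:ℝ≥0∞))
          (h := fun b => ENNReal.ofReal (‖x‖ ^ 2 / b ^ 2) * ν ‖x‖)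
          tendsto_const_nhds ?_ (fun b => zero_le)
          (fun b => mul_le_mul_left (min_le_right _ _) _)
        have h1 : Tendsto (fun b : ℝ => ‖x‖ ^ 2 / b ^ 2) atTop (nhds 0) :=
          Tendsto.div_atTop tendsto_const_nhds (tendsto_pow_atTop (by norm_num))
        have h2 : Tendsto (fun b : ℝ => ENNReal.ofReal (‖x‖ ^ 2 / b ^ 2)) atTop (nhds 0) := by
          have := ENNReal.tendsto_ofReal h1
          rwa [ENNReal.ofReal_zero] at this
        have h3 := ENNReal.Tendsto.mul_const h2 (Or.inr hνx)
        rwa [zero_mul] at h3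
  · -- part 2
    intro a b ha hab
    have hb : 0 < b := ha.trans hab
    have key : (∫⁻ r in Set.Ioc a b, 2 * Kfun d ν r / ENNReal.ofReal r)
        = ∫⁻ x : EuclideanSpace ℝ (Fin d),
            (if ‖x‖ < b then
              ENNReal.ofReal (1 / (max a ‖x‖) ^ 2 - 1 / b ^ 2) * ENNReal.ofReal (‖x‖ ^ 2)
            else 0) * ν ‖x‖ := by
      rw [swap_lemma d ν hν_meas _ measurableSet_Ioc
        (fun r hr => lt_trans ha hr.1)]
      refine lintegral_congr fun x => ?_
      rw [Set.Ioc_inter_Ioi]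
      by_cases hxb : ‖x‖ < b
      · rw [if_pos hxb, aux_rint_Ioc (max a ‖x‖) b (lt_max_of_lt_left ha)
          (max_le hab.le hxb.le)]
        ring
      · rw [if_neg hxb, Set.Ioc_eq_empty (by
          exact fun h => hxb (lt_of_le_of_lt (le_max_right a ‖x‖) h)),
          Measure.restrict_empty, lintegral_zero_measure, zero_mul, zero_mul]
    have hsplit : hfun d ν a = hfun d ν b +
        ∫⁻ r in Set.Ioc a b, 2 * Kfun d ν r / ENNReal.ofReal r := by
      rw [key, hfun, hfun, ← lintegral_add_left (hmeas_min b)]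
      refine lintegral_congr fun x => ?_
      rw [pt2 a b ‖x‖ ha hab (norm_nonneg x), add_mul]
    rw [hsplit, ENNReal.add_sub_cancel_left (hfun_ne_top d ν hν_int b hb)]
  · -- part 3
    intro a ha _
    rw [swap_lemma d ν hν_meas _ measurableSet_Ioi (fun r hr => lt_trans ha hr)]
    refine (lintegral_congr fun x => ?_).symm
    rw [Set.Ioi_inter_Ioi, aux_rint_Ioi (max a ‖x‖) (lt_max_of_lt_left ha),
      ← mul_assoc, pt3 a ‖x‖ ha (norm_nonneg x)]
end

section
/- For every r > 0 one has ν(r) ≤ (d+2)/ω_d · r^{-d} K(r), where ω_d = 2π^{d/2}/Γ(d/2) is the surface measure of the unit sphere in ℝ^d. -/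
open MeasureTheory ENNReal Filter Set

noncomputable def omegaD (d : ℕ) : ℝ :=
  2 * Real.pi ^ ((d : ℝ) / 2) / Real.Gamma ((d : ℝ) / 2)

lemma omegaD_eq (d : ℕ) (hd : 0 < d) :
    (d : ℝ) * (Real.sqrt Real.pi ^ d / Real.Gamma ((d : ℝ) / 2 + 1)) = omegaD d := by
  have hd2 : (0:ℝ) < (d : ℝ) / 2 := by positivity
  have hG : Real.Gamma ((d : ℝ) / 2 + 1) = ((d:ℝ)/2) * Real.Gamma ((d:ℝ)/2) :=
    Real.Gamma_add_one hd2.ne'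
  have hGpos : 0 < Real.Gamma ((d : ℝ) / 2) := Real.Gamma_pos_of_pos hd2
  have hsqrt : Real.sqrt Real.pi ^ d = Real.pi ^ ((d : ℝ) / 2) := by
    rw [Real.sqrt_eq_rpow, ← Real.rpow_natCast (Real.pi ^ (1/2 : ℝ)) d,
      ← Real.rpow_mul Real.pi_pos.le]
    ring_nf
  rw [hG, hsqrt, omegaD]
  have hdne : (d:ℝ) ≠ 0 := by positivity
  field_simp

lemma omegaD_pos (d : ℕ) (hd : 0 < d) : 0 < omegaD d := by
  have hd2 : (0:ℝ) < (d : ℝ) / 2 := by positivity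
  have hGpos : 0 < Real.Gamma ((d : ℝ) / 2) := Real.Gamma_pos_of_pos hd2
  have : (0:ℝ) < Real.pi ^ ((d : ℝ) / 2) := Real.rpow_pos_of_pos Real.pi_pos _
  unfold omegaD; positivity

lemma ball_lintegral (d : ℕ) (hd : 0 < d) (r : ℝ) (hr : 0 < r) :
    ∫⁻ x : EuclideanSpace ℝ (Fin d) in Metric.ball 0 r, ENNReal.ofReal (‖x‖ ^ 2)
      = ENNReal.ofReal (omegaD d * (r ^ (d + 2) / (d + 2))) := by
  have homega := omegaD_eq d hd
  haveI : Nonempty (Fin d) := Fin.pos_iff_nonempty.mp hd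
  have hint : IntegrableOn (fun x : EuclideanSpace ℝ (Fin d) => ‖x‖ ^ 2)
      (Metric.ball 0 r) := by
    refine ((continuous_norm.pow 2).continuousOn.integrableOn_compact
      (isCompact_closedBall (0 : EuclideanSpace ℝ (Fin d)) r)).mono_set
      Metric.ball_subset_closedBall
  rw [← ofReal_integral_eq_lintegral_ofReal hint
    (Filter.Eventually.of_forall fun x => by positivity)]
  congr 1
  have key : ∫ x : EuclideanSpace ℝ (Fin d) in Metric.ball 0 r, ‖x‖ ^ 2
      = ∫ x : EuclideanSpace ℝ (Fin d), Set.indicator (Iio r) (fun y => y ^ 2) ‖x‖ := by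
    rw [← integral_indicator measurableSet_ball]
    congr 1; ext x
    by_cases h : ‖x‖ < r <;>
      simp [Set.indicator, Metric.mem_ball, dist_zero_right, h]
  rw [key, integral_fun_norm_addHaar volume (Set.indicator (Iio r) (fun y => y ^ 2))]
  have hdim : Module.finrank ℝ (EuclideanSpace ℝ (Fin d)) = d := finrank_euclideanSpace_fin
  rw [hdim]
  have hinner : ∫ y in Ioi (0:ℝ), y ^ (d - 1) • Set.indicator (Iio r) (fun y => y ^ 2) y
      = r ^ (d + 2) / (d + 2) := by
    have : (fun y : ℝ => y ^ (d - 1) • Set.indicator (Iio r) (fun y => y ^ 2) y)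
        = Set.indicator (Iio r) (fun y => y ^ (d + 1)) := by
      ext y
      by_cases h : y < r
      · have : d - 1 + 2 = d + 1 := by omega
        simp [Set.indicator, h, smul_eq_mul, ← pow_add, this]
      · simp [Set.indicator, h]
    rw [this, setIntegral_indicator measurableSet_Iio]
    have : Ioi (0:ℝ) ∩ Iio r = Ioo 0 r := Ioi_inter_Iio
    rw [this, ← integral_Ioc_eq_integral_Ioo, ← intervalIntegral.integral_of_le hr.le,
      integral_pow]
    push_cast
    ring
  rw [hinner]
  have hvol : (volume (Metric.ball (0 : EuclideanSpace ℝ (Fin d)) 1)).toReal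
      = Real.sqrt Real.pi ^ d / Real.Gamma ((d : ℝ) / 2 + 1) := by
    rw [EuclideanSpace.volume_ball]
    simp [Fintype.card_fin]
    positivity
  rw [measureReal_def, hvol, nsmul_eq_mul, smul_eq_mul, ← mul_assoc, homega]

theorem stmt2 (d : ℕ) (hd : 0 < d) (ν : ℝ → ℝ≥0∞)
    (hν_meas : Measurable ν) (hν_mono : AntitoneOn ν (Set.Ici 0))
    (hν_int : (∫⁻ x : EuclideanSpace ℝ (Fin d),
      min 1 (ENNReal.ofReal (‖x‖ ^ 2)) * ν ‖x‖) ≠ ⊤)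
 :
    ∀ r : ℝ, 0 < r →
      ν r ≤ ENNReal.ofReal ((d + 2) / omegaD d) *
        (Kfun d ν r / ENNReal.ofReal (r ^ d)) := by
  intro r hr
  have hω : 0 < omegaD d := omegaD_pos d hd
  have hd2 : (0:ℝ) < (d:ℝ) + 2 := by positivity
  set c1 : ℝ := omegaD d / ((d:ℝ) + 2) with hc1
  have hc1pos : 0 < c1 := by positivity
  have hset : {x : EuclideanSpace ℝ (Fin d) | ‖x‖ < r} = Metric.ball 0 r := by
    ext x; simp [mem_ball_zero_iff]
  -- step 1 : lower bound on the set integral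
  have hg : Measurable fun x : EuclideanSpace ℝ (Fin d) =>
      ENNReal.ofReal (‖x‖ ^ 2) * ν ‖x‖ :=
    ((measurable_norm.pow_const 2).ennreal_ofReal).mul (hν_meas.comp measurable_norm)
  have h1 : ENNReal.ofReal (omegaD d * (r ^ (d + 2) / (d + 2))) * ν r ≤
      ∫⁻ x : EuclideanSpace ℝ (Fin d) in Metric.ball 0 r,
        ENNReal.ofReal (‖x‖ ^ 2) * ν ‖x‖ := by
    rw [← ball_lintegral d hd r hr,
      ← lintegral_mul_const'' (ν r)
        ((measurable_norm.pow_const 2).ennreal_ofReal.aemeasurable)]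
    refine setLIntegral_mono hg fun x hx => ?_
    exact mul_le_mul_right
      (hν_mono (mem_Ici.2 (norm_nonneg x)) (mem_Ici.2 hr.le)
        (le_of_lt (mem_ball_zero_iff.mp hx))) _
  -- step 2 : Kfun lower bound
  have hr2 : (0:ℝ) < r ^ 2 := by positivity
  have hrd : (0:ℝ) < r ^ d := by positivity
  have hconst : (ENNReal.ofReal (r ^ 2))⁻¹ *
      ENNReal.ofReal (omegaD d * (r ^ (d + 2) / (d + 2)))
      = ENNReal.ofReal c1 * ENNReal.ofReal (r ^ d) := by
    rw [← ENNReal.ofReal_mul hc1pos.le, ← ENNReal.div_eq_inv_mul,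
      ← ENNReal.ofReal_div_of_pos hr2]
    congr 1
    have hred : omegaD d * (r ^ (d + 2) / ((d:ℝ) + 2)) / r ^ 2
        = (omegaD d / ((d:ℝ) + 2)) * (r ^ (d + 2) / r ^ 2) := by ring
    rw [hred, pow_add, mul_div_cancel_right₀ _ hr2.ne', hc1]
  have h2 : ENNReal.ofReal c1 * ENNReal.ofReal (r ^ d) * ν r ≤ Kfun d ν r := by
    rw [Kfun, hset, ← hconst, mul_assoc]
    exact mul_le_mul_right h1 _
  -- step 3 : divide by r^d
  have hrdne : ENNReal.ofReal (r ^ d) ≠ 0 := by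
    simp [ENNReal.ofReal_eq_zero, not_le, hrd]
  have hrdtop : ENNReal.ofReal (r ^ d) ≠ ⊤ := ENNReal.ofReal_ne_top
  have h3 : ENNReal.ofReal c1 * ν r ≤ Kfun d ν r / ENNReal.ofReal (r ^ d) := by
    have : ENNReal.ofReal c1 * ν r
        = ENNReal.ofReal c1 * ENNReal.ofReal (r ^ d) * ν r / ENNReal.ofReal (r ^ d) := by
      rw [div_eq_mul_inv, mul_right_comm, mul_right_comm (ENNReal.ofReal c1),
        mul_assoc (ENNReal.ofReal c1), ENNReal.inv_mul_cancel hrdne hrdtop, mul_one]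
    rw [this]
    exact ENNReal.div_le_div_right h2 _
  -- step 4 : conclude
  calc ν r = ENNReal.ofReal (((d:ℝ) + 2) / omegaD d) * (ENNReal.ofReal c1 * ν r) := by
        rw [← mul_assoc, ← ENNReal.ofReal_mul (by positivity), hc1]
        rw [div_mul_div_comm, mul_comm ((d:ℝ)+2) (omegaD d),
          div_self (by positivity), ENNReal.ofReal_one, one_mul]
    _ ≤ ENNReal.ofReal (((d:ℝ) + 2) / omegaD d) * (Kfun d ν r / ENNReal.ofReal (r ^ d)) :=
        mul_le_mul_right h3 _
end

section
/- If h satisfies the weak lower scaling h(r) ≤ C_h λ^{α_h} h(λr) for λ ≤ 1, r < θ_h, then there is c = c(α_h, C_h) > 0 such that h(r) ≤ c K(r) for all r < θ_h. Conversely, if h(r) ≤ c K(r) for all r < θ_h, then the scaling condition holds with α_h = 2/c and C_h = 1. -/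
open MeasureTheory ENNReal Filter Set

namespace Stmt5Aux

noncomputable def Lfun (d : ℕ) (ν : ℝ → ℝ≥0∞) (r : ℝ) : ℝ≥0∞ :=
  ∫⁻ x : EuclideanSpace ℝ (Fin d) in {x | r ≤ ‖x‖}, ν ‖x‖

noncomputable def Lo (d : ℕ) (ν : ℝ → ℝ≥0∞) (s : ℝ) : ℝ≥0∞ :=
  ∫⁻ x : EuclideanSpace ℝ (Fin d) in {x | s < ‖x‖}, ν ‖x‖

variable {d : ℕ} {ν : ℝ → ℝ≥0∞}

lemma min_ofReal (a : ℝ) : min 1 (ENNReal.ofReal a) = ENNReal.ofReal (min 1 a) := by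
  rcases le_total 1 a with h | h
  · rw [min_eq_left h, min_eq_left (by rw [← ENNReal.ofReal_one]; exact ENNReal.ofReal_le_ofReal h)]
    exact ENNReal.ofReal_one.symm
  · rw [min_eq_right h, min_eq_right (by rw [← ENNReal.ofReal_one]; exact ENNReal.ofReal_le_ofReal h)]

lemma hfun_ne_top (hν_int : (∫⁻ x : EuclideanSpace ℝ (Fin d),
      min 1 (ENNReal.ofReal (‖x‖ ^ 2)) * ν ‖x‖) ≠ ⊤) {r : ℝ} (hr : 0 < r) :
    hfun d ν r ≠ ⊤ := by
  have key : ∀ x : EuclideanSpace ℝ (Fin d),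
      min 1 (ENNReal.ofReal (‖x‖ ^ 2 / r ^ 2)) * ν ‖x‖ ≤
        ENNReal.ofReal (max 1 (r⁻¹ ^ 2)) * (min 1 (ENNReal.ofReal (‖x‖ ^ 2)) * ν ‖x‖) := by
    intro x
    rw [← mul_assoc]
    refine mul_le_mul_left ?_ _
    rw [min_ofReal, min_ofReal, ← ENNReal.ofReal_mul (by positivity)]
    refine ENNReal.ofReal_le_ofReal ?_
    set n := ‖x‖ with hn
    have hn0 : 0 ≤ n := norm_nonneg _
    rcases le_total n 1 with h | h
    · have h1 : min 1 (n ^ 2) = n ^ 2 := min_eq_right (by nlinarith)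
      rw [h1]
      calc min 1 (n ^ 2 / r ^ 2) ≤ n ^ 2 / r ^ 2 := min_le_right _ _
        _ = r⁻¹ ^ 2 * n ^ 2 := by rw [div_eq_mul_inv, ← inv_pow]; ring
        _ ≤ max 1 (r⁻¹ ^ 2) * n ^ 2 := by gcongr; exact le_max_right _ _
    · have h1 : min 1 (n ^ 2) = 1 := min_eq_left (by nlinarith)
      rw [h1, mul_one]
      exact le_trans (min_le_left _ _) (le_max_left _ _)
  have : hfun d ν r ≤ ENNReal.ofReal (max 1 (r⁻¹ ^ 2)) *
      ∫⁻ x : EuclideanSpace ℝ (Fin d), min 1 (ENNReal.ofReal (‖x‖ ^ 2)) * ν ‖x‖ := by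
    rw [← lintegral_const_mul' _ _ ENNReal.ofReal_ne_top]
    exact lintegral_mono key
  exact ne_top_of_le_ne_top (ENNReal.mul_ne_top ENNReal.ofReal_ne_top hν_int) this

lemma hfun_split (hν : Measurable ν) {r : ℝ} (hr : 0 < r) :
    hfun d ν r = Kfun d ν r + Lfun d ν r := by
  have hs : MeasurableSet {x : EuclideanSpace ℝ (Fin d) | ‖x‖ < r} :=
    measurableSet_lt measurable_norm measurable_const
  have hcompl : {x : EuclideanSpace ℝ (Fin d) | ‖x‖ < r}ᶜ = {x | r ≤ ‖x‖} := by
    ext x; simp [not_lt]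
  rw [hfun, ← lintegral_add_compl _ hs, hcompl]
  congr 1
  · rw [Kfun, ← lintegral_const_mul' _ _ (ENNReal.inv_ne_top.mpr (by
      simpa using hr.ne'))]
    refine setLIntegral_congr_fun hs (fun x hx => ?_)
    have hx' : ‖x‖ < r := hx
    have h1 : ‖x‖ ^ 2 / r ^ 2 < 1 := by
      rw [div_lt_one (by positivity)]
      exact pow_lt_pow_left₀ hx' (norm_nonneg _) (by norm_num)
    rw [min_eq_right (ENNReal.ofReal_le_one.mpr h1.le),
      ENNReal.ofReal_div_of_pos (by positivity), ENNReal.div_eq_inv_mul]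
    ring
  · rw [Lfun]
    refine setLIntegral_congr_fun (measurableSet_le measurable_const measurable_norm)
      (fun x hx => ?_)
    have hx' : r ≤ ‖x‖ := hx
    have h1 : (1:ℝ) ≤ ‖x‖ ^ 2 / r ^ 2 := by
      rw [le_div_iff₀ (by positivity), one_mul]
      exact pow_le_pow_left₀ hr.le hx' 2
    rw [min_eq_left (ENNReal.one_le_ofReal.mpr h1), one_mul]

lemma Lo_eq_Lfun (hd : 0 < d) (s : ℝ) : Lo d ν s = Lfun d ν s := by
  haveI : Nonempty (Fin d) := ⟨⟨0, hd⟩⟩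
  haveI : Nontrivial (EuclideanSpace ℝ (Fin d)) := by
    infer_instance
  refine setLIntegral_congr ?_
  have hsub : (symmDiff {x : EuclideanSpace ℝ (Fin d) | s < ‖x‖} {x | s ≤ ‖x‖}) ⊆
      Metric.sphere (0 : EuclideanSpace ℝ (Fin d)) s := by
    intro x hx
    rw [Set.mem_symmDiff] at hx
    rcases hx with ⟨h1, h2⟩ | ⟨h1, h2⟩
    · simp only [mem_setOf_eq] at h1 h2
      exact absurd h1.le h2
    · simp only [mem_setOf_eq, not_lt] at h1 h2
      simp [mem_sphere_zero_iff_norm, le_antisymm h2 h1]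
  refine (MeasureTheory.measure_symmDiff_eq_zero_iff).mp ?_
  exact measure_mono_null hsub (MeasureTheory.Measure.addHaar_sphere volume 0 s)

lemma Lo_anti : Antitone (Lo d ν) := fun _ _ h =>
  lintegral_mono_set (fun _ hx => lt_of_le_of_lt h hx)

lemma Lo_meas : Measurable (Lo d ν) := Lo_anti.measurable

lemma lint_Ioo (m : ℝ) (hm : 0 ≤ m) :
    (∫⁻ s in Set.Ioo 0 m, ENNReal.ofReal (2 * s)) = ENNReal.ofReal (m ^ 2) := by
  have hint : IntegrableOn (fun s : ℝ => 2 * s) (Set.Ioo 0 m) volume :=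
    ((continuous_const.mul continuous_id).integrableOn_Icc).mono_set Set.Ioo_subset_Icc_self
  rw [← ofReal_integral_eq_lintegral_ofReal hint
    (ae_restrict_of_forall_mem measurableSet_Ioo fun s hs => by
      have h := hs.1; simp only [Pi.zero_apply]; nlinarith)]
  congr 1
  rw [← MeasureTheory.integral_Ioc_eq_integral_Ioo, ← intervalIntegral.integral_of_le hm]
  rw [intervalIntegral.integral_const_mul, integral_id]
  ring

lemma lint_Ioc (m : ℝ) (hm : 0 ≤ m) :
    (∫⁻ s in Set.Ioc 0 m, ENNReal.ofReal (2 * s)) = ENNReal.ofReal (m ^ 2) := by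
  rw [← lint_Ioo m hm]
  exact (setLIntegral_congr (MeasureTheory.Ioo_ae_eq_Ioc).symm).symm.symm

lemma F_eq (hν_meas : Measurable ν) {t : ℝ} (ht : 0 < t) :
    ENNReal.ofReal (t ^ 2) * hfun d ν t
      = ∫⁻ s in Set.Ioc 0 t, 2 * ENNReal.ofReal s * Lo d ν s := by
  set T : Set (EuclideanSpace ℝ (Fin d) × ℝ) := {p | p.2 < ‖p.1‖} with hT
  set F : EuclideanSpace ℝ (Fin d) × ℝ → ℝ≥0∞ :=
    T.indicator (fun p => ENNReal.ofReal (2 * p.2) * ν ‖p.1‖) with hF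
  have hTmeas : MeasurableSet T := measurableSet_lt measurable_snd measurable_fst.norm
  have hFmeas : Measurable F :=
    ((measurable_snd.const_mul 2).ennreal_ofReal.mul
      (hν_meas.comp measurable_fst.norm)).indicator hTmeas
  have step1 : ∀ x : EuclideanSpace ℝ (Fin d),
      ENNReal.ofReal (t ^ 2) * (min 1 (ENNReal.ofReal (‖x‖ ^ 2 / t ^ 2)) * ν ‖x‖)
        = ∫⁻ s in Set.Ioc 0 t, F (x, s) := by
    intro x
    have hpt : ∀ s, F (x, s) =
        Set.indicator {u : ℝ | u < ‖x‖} (fun s => ENNReal.ofReal (2 * s)) s * ν ‖x‖ := by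
      intro s
      rw [hF, Set.indicator_apply, Set.indicator_apply]
      by_cases h : s < ‖x‖
      · rw [if_pos (show (x, s) ∈ T from h), if_pos (show s ∈ {u : ℝ | u < ‖x‖} from h)]
      · rw [if_neg (show (x, s) ∉ T from h), if_neg (show s ∉ {u : ℝ | u < ‖x‖} from h),
          zero_mul]
    have key : (∫⁻ s in Set.Ioc 0 t,
        Set.indicator {u : ℝ | u < ‖x‖} (fun s => ENNReal.ofReal (2 * s)) s)
        = ENNReal.ofReal (t ^ 2) * min 1 (ENNReal.ofReal (‖x‖ ^ 2 / t ^ 2)) := by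
      rw [lintegral_indicator (show MeasurableSet {u : ℝ | u < ‖x‖} from measurableSet_Iio) _,
        Measure.restrict_restrict (show MeasurableSet {u : ℝ | u < ‖x‖} from measurableSet_Iio)]
      rcases le_or_gt ‖x‖ t with hc | hc
      · have hset : {u : ℝ | u < ‖x‖} ∩ Set.Ioc 0 t = Set.Ioo 0 ‖x‖ := by
          ext u
          simp only [Set.mem_inter_iff, Set.mem_setOf_eq, Set.mem_Ioc, Set.mem_Ioo]
          constructor
          · rintro ⟨h1, h2, h3⟩; exact ⟨h2, h1⟩
          · rintro ⟨h1, h2⟩; exact ⟨h2, h1, le_trans h2.le hc⟩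
        rw [hset, lint_Ioo _ (norm_nonneg x)]
        have h1 : ‖x‖ ^ 2 / t ^ 2 ≤ 1 := by
          rw [div_le_one (by positivity)]
          exact pow_le_pow_left₀ (norm_nonneg x) hc 2
        rw [min_eq_right (ENNReal.ofReal_le_one.mpr h1),
          ← ENNReal.ofReal_mul (by positivity)]
        congr 1
        field_simp
      · have hset : {u : ℝ | u < ‖x‖} ∩ Set.Ioc 0 t = Set.Ioc 0 t := by
          ext u
          simp only [Set.mem_inter_iff, Set.mem_setOf_eq, Set.mem_Ioc]
          exact ⟨fun h => h.2, fun h => ⟨lt_of_le_of_lt h.2 hc, h⟩⟩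
        rw [hset, lint_Ioc _ ht.le]
        have h1 : (1:ℝ) ≤ ‖x‖ ^ 2 / t ^ 2 := by
          rw [le_div_iff₀ (by positivity), one_mul]
          exact pow_le_pow_left₀ ht.le hc.le 2
        rw [min_eq_left (ENNReal.one_le_ofReal.mpr h1), mul_one]
    have hmind : Measurable fun s : ℝ =>
        Set.indicator {u : ℝ | u < ‖x‖} (fun s => ENNReal.ofReal (2 * s)) s :=
      Measurable.indicator (by fun_prop) (measurableSet_lt measurable_id measurable_const)
    calc ENNReal.ofReal (t ^ 2) * (min 1 (ENNReal.ofReal (‖x‖ ^ 2 / t ^ 2)) * ν ‖x‖)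
        = (∫⁻ s in Set.Ioc 0 t,
            Set.indicator {u : ℝ | u < ‖x‖} (fun s => ENNReal.ofReal (2 * s)) s) * ν ‖x‖ := by
          rw [key, mul_assoc]
      _ = ∫⁻ s in Set.Ioc 0 t,
            Set.indicator {u : ℝ | u < ‖x‖} (fun s => ENNReal.ofReal (2 * s)) s * ν ‖x‖ :=
          (lintegral_mul_const _ hmind).symm
      _ = ∫⁻ s in Set.Ioc 0 t, F (x, s) := lintegral_congr fun s => (hpt s).symm
  have swap : (∫⁻ x : EuclideanSpace ℝ (Fin d), ∫⁻ s in Set.Ioc 0 t, F (x, s))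
      = ∫⁻ s in Set.Ioc 0 t, ∫⁻ x : EuclideanSpace ℝ (Fin d), F (x, s) :=
    lintegral_lintegral_swap hFmeas.aemeasurable
  have inner : ∀ s : ℝ, s ∈ Set.Ioc 0 t →
      (∫⁻ x : EuclideanSpace ℝ (Fin d), F (x, s)) = 2 * ENNReal.ofReal s * Lo d ν s := by
    intro s hs
    have hpt2 : ∀ x : EuclideanSpace ℝ (Fin d), F (x, s) =
        Set.indicator {x : EuclideanSpace ℝ (Fin d) | s < ‖x‖}
          (fun x => ENNReal.ofReal (2 * s) * ν ‖x‖) x := by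
      intro x
      rw [hF, Set.indicator_apply, Set.indicator_apply]
      by_cases h : s < ‖x‖
      · rw [if_pos (show (x, s) ∈ T from h),
          if_pos (show x ∈ {x : EuclideanSpace ℝ (Fin d) | s < ‖x‖} from h)]
      · rw [if_neg (show (x, s) ∉ T from h),
          if_neg (show x ∉ {x : EuclideanSpace ℝ (Fin d) | s < ‖x‖} from h)]
    simp_rw [hpt2]
    rw [lintegral_indicator (show MeasurableSet {x : EuclideanSpace ℝ (Fin d) | s < ‖x‖} from
      measurableSet_lt measurable_const measurable_norm) _,
      lintegral_const_mul' _ _ ENNReal.ofReal_ne_top,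
      ENNReal.ofReal_mul (by norm_num : (0:ℝ) ≤ 2), ENNReal.ofReal_ofNat]
    rfl
  rw [hfun, ← lintegral_const_mul' _ _ ENNReal.ofReal_ne_top]
  rw [lintegral_congr step1, swap]
  exact setLIntegral_congr_fun measurableSet_Ioc inner

lemma gronwall_pow {a b γ : ℝ} (ha : 0 < a) (hab : a ≤ b) (hγ : 0 ≤ γ)
    {f : ℝ → ℝ} (hf : ContinuousOn f (Set.Icc a b))
    (hint : ∀ t ∈ Set.Icc a b, f t ≤ f a + γ * ∫ s in a..t, f s / s) :
    f b ≤ f a * (b / a) ^ γ := by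
  rcases eq_or_lt_of_le hγ with hγ0 | hγpos
  · subst hγ0
    have h := hint b ⟨hab, le_refl b⟩
    rw [Real.rpow_zero, mul_one]
    linarith [h]
  have hR : ∀ t ∈ Set.Icc a b, (0:ℝ) < (t / a) ^ γ := by
    intro t ht
    have : 0 < t / a := div_pos (lt_of_lt_of_le ha ht.1) ha
    positivity
  refine le_of_forall_pos_le_add fun ε hε => ?_
  have hRb : (0:ℝ) < (b / a) ^ γ := hR b ⟨hab, le_refl b⟩
  set δ := ε / (b / a) ^ γ with hδdef
  have hδ : 0 < δ := div_pos hε hRb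
  set ψ : ℝ → ℝ := fun t => (f a + δ) * (t / a) ^ γ with hψdef
  have hψcont : ContinuousOn ψ (Set.Icc a b) := by
    refine ContinuousOn.mul continuousOn_const ?_
    exact ((continuousOn_id.div_const a).rpow_const fun x _ => Or.inr hγ)
  have main : ∀ t ∈ Set.Icc a b, f t ≤ ψ t := by
    by_contra hcon
    push_neg at hcon
    obtain ⟨t₀, ht₀, ht₀'⟩ := hcon
    set S := Set.Icc a b ∩ {t | ψ t - f t ≤ 0} with hSdef
    have hSne : S.Nonempty := ⟨t₀, ht₀, by simp only [Set.mem_setOf_eq]; linarith⟩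
    have hScl : IsClosed S := by
      have : ContinuousOn (fun t => ψ t - f t) (Set.Icc a b) := hψcont.sub hf
      exact this.preimage_isClosed_of_isClosed isClosed_Icc isClosed_Iic
    have hScomp : IsCompact S := isCompact_Icc.of_isClosed_subset hScl Set.inter_subset_left
    set T := sInf S with hTdef
    have hTS : T ∈ S := hScomp.sInf_mem hSne
    have hTab : T ∈ Set.Icc a b := hTS.1
    have hTgt : ψ T ≤ f T := by
      have h2 := hTS.2
      simp only [Set.mem_setOf_eq] at h2
      linarith
    have hTa : a < T := by
      rcases eq_or_lt_of_le hTab.1 with h | h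
      · exfalso
        have hψa : ψ T = f a + δ := by
          rw [hψdef]; simp only [← h, div_self ha.ne', Real.one_rpow, mul_one]
        have hfT : f T = f a := by rw [← h]
        linarith
      · exact h
    have hlt : ∀ u ∈ Set.Ico a T, f u ≤ ψ u := by
      intro u hu
      by_contra hcu
      push_neg at hcu
      have huS : u ∈ S := ⟨⟨hu.1, le_trans hu.2.le hTab.2⟩,
        by simp only [Set.mem_setOf_eq]; linarith⟩
      exact absurd (csInf_le hScomp.bddBelow huS) (not_le.mpr hu.2)
    have hint_T := hint T hTab
    have hIccT : Set.Icc a T ⊆ Set.Icc a b := Set.Icc_subset_Icc le_rfl hTab.2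
    have hfi : IntegrableOn (fun s => f s / s) (Set.Ioc a T) volume := by
      refine (((hf.mono hIccT).div continuousOn_id ?_).integrableOn_Icc).mono_set
        Set.Ioc_subset_Icc_self
      intro x hx; exact (lt_of_lt_of_le ha hx.1).ne'
    have hψi : IntegrableOn (fun s => ψ s / s) (Set.Ioc a T) volume := by
      refine (((hψcont.mono hIccT).div continuousOn_id ?_).integrableOn_Icc).mono_set
        Set.Ioc_subset_Icc_self
      intro x hx; exact (lt_of_lt_of_le ha hx.1).ne'
    have hmono : (∫ s in a..T, f s / s) ≤ ∫ s in a..T, ψ s / s := by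
      rw [intervalIntegral.integral_of_le hTa.le, intervalIntegral.integral_of_le hTa.le,
        MeasureTheory.integral_Ioc_eq_integral_Ioo, MeasureTheory.integral_Ioc_eq_integral_Ioo]
      refine setIntegral_mono_on (hfi.mono_set Set.Ioo_subset_Ioc_self)
        (hψi.mono_set Set.Ioo_subset_Ioc_self) measurableSet_Ioo fun s hs => ?_
      have hs0 : 0 < s := lt_of_lt_of_le ha hs.1.le
      have hfs : f s ≤ ψ s := hlt s ⟨hs.1.le, hs.2⟩
      exact (div_le_div_iff_of_pos_right hs0).mpr hfs
    have hEq : ∀ s ∈ Set.uIcc a T, ψ s / s = (f a + δ) / a ^ γ * s ^ (γ - 1) := by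
      intro s hs
      rw [Set.uIcc_of_le hTa.le] at hs
      have hs0 : 0 < s := lt_of_lt_of_le ha hs.1
      rw [hψdef]
      simp only []
      rw [Real.div_rpow hs0.le ha.le, Real.rpow_sub_one hs0.ne']
      field_simp
    have hval : (∫ s in a..T, ψ s / s) = (f a + δ) * ((T / a) ^ γ - 1) / γ := by
      rw [intervalIntegral.integral_congr hEq, intervalIntegral.integral_const_mul,
        integral_rpow (Or.inl (by linarith : (-1:ℝ) < γ - 1))]
      have hg1 : γ - 1 + 1 = γ := by ring
      rw [hg1, Real.div_rpow (le_trans ha.le hTa.le) ha.le]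
      have haγ : (0:ℝ) < a ^ γ := Real.rpow_pos_of_pos ha γ
      field_simp
    have hfinal : f T ≤ ψ T - δ := by
      have h1 : γ * (∫ s in a..T, f s / s) ≤ γ * ∫ s in a..T, ψ s / s :=
        mul_le_mul_of_nonneg_left hmono hγ
      have h2 : γ * ((f a + δ) * ((T / a) ^ γ - 1) / γ) = (f a + δ) * ((T / a) ^ γ - 1) := by
        field_simp
      have hψT : ψ T = (f a + δ) * (T / a) ^ γ := rfl
      rw [hval] at h1
      nlinarith [hint_T]
    linarith
  have hmb := main b ⟨hab, le_refl b⟩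
  have hψb : ψ b = f a * (b / a) ^ γ + ε := by
    rw [hψdef]
    simp only []
    rw [add_mul, hδdef, div_mul_cancel₀ _ hRb.ne']
  linarith

end Stmt5Aux

open Stmt5Aux

theorem stmt5 (d : ℕ) (hd : 0 < d) (ν : ℝ → ℝ≥0∞)
    (hν_meas : Measurable ν) (hν_mono : AntitoneOn ν (Set.Ici 0))
    (hν_int : (∫⁻ x : EuclideanSpace ℝ (Fin d),
      min 1 (ENNReal.ofReal (‖x‖ ^ 2)) * ν ‖x‖) ≠ ⊤)
    (α C : ℝ) (θ : ℝ≥0∞) (hα : 0 < α) (hα2 : α ≤ 2) (hC : 1 ≤ C) (hθ : 0 < θ) :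
    ((∀ lam r : ℝ, 0 < lam → lam ≤ 1 → 0 < r → ENNReal.ofReal r < θ →
        hfun d ν r ≤ ENNReal.ofReal (C * lam ^ α) * hfun d ν (lam * r)) →
      ∃ c : ℝ, 0 < c ∧ ∀ r : ℝ, 0 < r → ENNReal.ofReal r < θ →
        hfun d ν r ≤ ENNReal.ofReal c * Kfun d ν r) ∧
    (∀ c : ℝ, 0 < c →
      (∀ r : ℝ, 0 < r → ENNReal.ofReal r < θ →
        hfun d ν r ≤ ENNReal.ofReal c * Kfun d ν r) →
      ∀ lam r : ℝ, 0 < lam → lam ≤ 1 → 0 < r → ENNReal.ofReal r < θ →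
        hfun d ν r ≤ ENNReal.ofReal (lam ^ (2 / c)) * hfun d ν (lam * r)) := by
  constructor
  · -- forward direction
    intro Hsc
    set lam0 : ℝ := (2 * C) ^ (-1 / α) with hl
    have h2C : (1:ℝ) < 2 * C := by linarith
    have hlam0_pos : 0 < lam0 := Real.rpow_pos_of_pos (by linarith) _
    have hlam0_le : lam0 ≤ 1 :=
      Real.rpow_le_one_of_one_le_of_nonpos h2C.le
        (div_nonpos_of_nonpos_of_nonneg (by norm_num) hα.le)
    have hCl : C * lam0 ^ α = 1 / 2 := by
      rw [hl, ← Real.rpow_mul (by linarith : (0:ℝ) ≤ 2 * C)]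
      have hα' : -1 / α * α = -1 := by field_simp
      rw [hα', Real.rpow_neg_one]
      field_simp
    refine ⟨2 * (lam0 ^ 2)⁻¹, by positivity, fun r hr hrθ => ?_⟩
    have hsc := Hsc lam0 r hlam0_pos hlam0_le hr hrθ
    rw [hCl] at hsc
    set B := ENNReal.ofReal (lam0 ^ 2) with hB
    have hB0 : B ≠ 0 := by
      rw [hB, Ne, ENNReal.ofReal_eq_zero, not_le]
      positivity
    have hBt : B ≠ ⊤ := ENNReal.ofReal_ne_top
    have hinv_eq : (ENNReal.ofReal ((lam0 * r) ^ 2))⁻¹ = B⁻¹ * (ENNReal.ofReal (r ^ 2))⁻¹ := by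
      rw [show (lam0 * r) ^ 2 = lam0 ^ 2 * r ^ 2 by ring,
        ENNReal.ofReal_mul (by positivity), ← hB,
        ENNReal.mul_inv (Or.inl hB0) (Or.inl hBt)]
    have hK : Kfun d ν (lam0 * r) ≤ B⁻¹ * Kfun d ν r := by
      rw [Kfun, Kfun, hinv_eq, mul_assoc]
      refine mul_le_mul_right (mul_le_mul_right (lintegral_mono_set ?_) _) _
      intro x hx
      exact lt_of_lt_of_le (show ‖x‖ < lam0 * r from hx) (by nlinarith)
    have hLK : Lfun d ν (lam0 * r) ≤ B⁻¹ * Kfun d ν r + Lfun d ν r := by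
      have hsplitset : {x : EuclideanSpace ℝ (Fin d) | lam0 * r ≤ ‖x‖}
          = {x | lam0 * r ≤ ‖x‖ ∧ ‖x‖ < r} ∪ {x | r ≤ ‖x‖} := by
        ext x
        simp only [mem_setOf_eq, mem_union]
        constructor
        · intro h
          by_cases h2 : ‖x‖ < r
          · exact Or.inl ⟨h, h2⟩
          · exact Or.inr (not_lt.mp h2)
        · rintro (⟨h, _⟩ | h)
          · exact h
          · nlinarith
      have hdisj : Disjoint {x : EuclideanSpace ℝ (Fin d) | lam0 * r ≤ ‖x‖ ∧ ‖x‖ < r}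
          {x | r ≤ ‖x‖} := by
        rw [Set.disjoint_left]
        rintro x ⟨_, h2⟩ h3
        exact absurd h3 (not_le.mpr h2)
      rw [Lfun, hsplitset,
        lintegral_union (measurableSet_le measurable_const measurable_norm) hdisj]
      refine add_le_add ?_ le_rfl
      calc (∫⁻ x in {x : EuclideanSpace ℝ (Fin d) | lam0 * r ≤ ‖x‖ ∧ ‖x‖ < r}, ν ‖x‖)
          ≤ ∫⁻ x in {x : EuclideanSpace ℝ (Fin d) | lam0 * r ≤ ‖x‖ ∧ ‖x‖ < r},
              (ENNReal.ofReal ((lam0 * r) ^ 2))⁻¹ * (ENNReal.ofReal (‖x‖ ^ 2) * ν ‖x‖) := by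
            refine setLIntegral_mono (by fun_prop) fun x hx => ?_
            have h1 : ENNReal.ofReal ((lam0 * r) ^ 2) ≤ ENNReal.ofReal (‖x‖ ^ 2) :=
              ENNReal.ofReal_le_ofReal (pow_le_pow_left₀ (by positivity) hx.1 2)
            calc ν ‖x‖ = 1 * ν ‖x‖ := (one_mul _).symm
              _ ≤ ((ENNReal.ofReal ((lam0 * r) ^ 2))⁻¹ * ENNReal.ofReal (‖x‖ ^ 2)) * ν ‖x‖ := by
                  refine mul_le_mul_left ?_ _
                  refine le_trans (le_of_eq (ENNReal.inv_mul_cancel ?_ ENNReal.ofReal_ne_top).symm)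
                    (mul_le_mul_right h1 _)
                  rw [Ne, ENNReal.ofReal_eq_zero, not_le]
                  positivity
              _ = (ENNReal.ofReal ((lam0 * r) ^ 2))⁻¹ * (ENNReal.ofReal (‖x‖ ^ 2) * ν ‖x‖) := by
                  rw [mul_assoc]
        _ ≤ ∫⁻ x in {x : EuclideanSpace ℝ (Fin d) | ‖x‖ < r},
              (ENNReal.ofReal ((lam0 * r) ^ 2))⁻¹ * (ENNReal.ofReal (‖x‖ ^ 2) * ν ‖x‖) :=
            lintegral_mono_set fun x hx => hx.2
        _ = B⁻¹ * Kfun d ν r := by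
            rw [lintegral_const_mul' _ _ (ENNReal.inv_ne_top.mpr (by
              rw [Ne, ENNReal.ofReal_eq_zero, not_le]; positivity)), hinv_eq, Kfun, mul_assoc]
    have hLle : Lfun d ν r ≤ hfun d ν r := by
      rw [hfun_split hν_meas hr]
      exact le_add_self
    have htot : hfun d ν (lam0 * r) ≤ 2 * (B⁻¹ * Kfun d ν r) + hfun d ν r := by
      rw [hfun_split hν_meas (mul_pos hlam0_pos hr), two_mul]
      calc Kfun d ν (lam0 * r) + Lfun d ν (lam0 * r)
          ≤ B⁻¹ * Kfun d ν r + (B⁻¹ * Kfun d ν r + Lfun d ν r) := add_le_add hK hLK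
        _ ≤ B⁻¹ * Kfun d ν r + (B⁻¹ * Kfun d ν r + hfun d ν r) :=
            add_le_add_right (add_le_add_right hLle _) _
        _ = B⁻¹ * Kfun d ν r + B⁻¹ * Kfun d ν r + hfun d ν r := by rw [add_assoc]
    have h12 : ENNReal.ofReal (1 / 2 : ℝ) = 2⁻¹ := by
      rw [show (1 / 2 : ℝ) = 2⁻¹ by norm_num, ENNReal.ofReal_inv_of_pos two_pos,
        ENNReal.ofReal_ofNat]
    have hmain : hfun d ν r ≤ B⁻¹ * Kfun d ν r + 2⁻¹ * hfun d ν r := by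
      calc hfun d ν r ≤ ENNReal.ofReal (1 / 2) * hfun d ν (lam0 * r) := hsc
        _ ≤ 2⁻¹ * (2 * (B⁻¹ * Kfun d ν r) + hfun d ν r) := by
            rw [h12]; exact mul_le_mul_right htot _
        _ = B⁻¹ * Kfun d ν r + 2⁻¹ * hfun d ν r := by
            rw [mul_add, ← mul_assoc, ENNReal.inv_mul_cancel two_ne_zero ENNReal.ofNat_ne_top,
              one_mul]
    have hfr : hfun d ν r ≠ ⊤ := hfun_ne_top hν_int hr
    have hhalf : 2⁻¹ * hfun d ν r = hfun d ν r / 2 := by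
      rw [ENNReal.div_eq_inv_mul]
    have hsub : hfun d ν r / 2 ≤ B⁻¹ * Kfun d ν r := by
      rw [← ENNReal.sub_half hfr]
      refine tsub_le_iff_right.mpr ?_
      rw [← hhalf]
      exact hmain
    have hfinal : hfun d ν r ≤ 2 * (B⁻¹ * Kfun d ν r) := by
      calc hfun d ν r = hfun d ν r / 2 + hfun d ν r / 2 := (ENNReal.add_halves _).symm
        _ ≤ B⁻¹ * Kfun d ν r + B⁻¹ * Kfun d ν r := add_le_add hsub hsub
        _ = 2 * (B⁻¹ * Kfun d ν r) := (two_mul _).symm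
    refine le_trans hfinal (le_of_eq ?_)
    rw [ENNReal.ofReal_mul (by norm_num : (0:ℝ) ≤ 2), ENNReal.ofReal_ofNat,
      ENNReal.ofReal_inv_of_pos (by positivity : (0:ℝ) < lam0 ^ 2), ← hB, mul_assoc]
  · -- converse direction
    intro c hc H lam r hlam hlam1 hr hrθ
    have hfin : ∀ t : ℝ, 0 < t → hfun d ν t ≠ ⊤ := fun t ht => hfun_ne_top hν_int ht
    by_cases hc1 : 1 ≤ c
    swap
    · -- c < 1 forces hfun r = 0
      have hKh : Kfun d ν r ≤ hfun d ν r := by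
        rw [hfun_split hν_meas hr]
        exact self_le_add_right _ _
      have h0 : hfun d ν r = 0 := by
        by_contra hne
        have h1 : hfun d ν r ≤ ENNReal.ofReal c * hfun d ν r :=
          le_trans (H r hr hrθ) (mul_le_mul_right hKh _)
        have hlt : ENNReal.ofReal c * hfun d ν r < 1 * hfun d ν r := by
          refine (ENNReal.mul_lt_mul_iff_left hne (hfin r hr)).mpr ?_
          exact ENNReal.ofReal_lt_one.mpr (not_le.mp hc1)
        rw [one_mul] at hlt
        exact absurd h1 (not_le.mpr hlt)
      rw [h0]
      exact zero_le
    · set a : ℝ := lam * r with hadef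
      set b : ℝ := r with hbdef
      have ha : 0 < a := mul_pos hlam hr
      have hab : a ≤ b := by rw [hadef, hbdef]; nlinarith
      set γ : ℝ := 2 - 2 / c with hγdef
      have hγ0 : 0 ≤ γ := by
        have h1 : 2 / c ≤ 2 := by
          rw [div_le_iff₀ hc]
          nlinarith
        rw [hγdef]; linarith
      have hLofin : ∀ s : ℝ, 0 < s → Lo d ν s ≠ ⊤ := by
        intro s hs
        rw [Lo_eq_Lfun hd]
        refine ne_top_of_le_ne_top (hfin s hs) ?_
        rw [hfun_split hν_meas hs]
        exact le_add_self
      have hLbound : ∀ s : ℝ, 0 < s → ENNReal.ofReal s < θ →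
          2 * ENNReal.ofReal s * Lo d ν s ≤ ENNReal.ofReal (γ * s) * hfun d ν s := by
        intro s hs hsθ
        have hH := H s hs hsθ
        have hsplit := hfun_split (d := d) hν_meas hs
        have h1 : ENNReal.ofReal c * Lo d ν s + hfun d ν s ≤ ENNReal.ofReal c * hfun d ν s := by
          calc ENNReal.ofReal c * Lo d ν s + hfun d ν s
              ≤ ENNReal.ofReal c * Lo d ν s + ENNReal.ofReal c * Kfun d ν s :=
                add_le_add le_rfl hH
            _ = ENNReal.ofReal c * hfun d ν s := by
                rw [hsplit, Lo_eq_Lfun hd, mul_add, add_comm]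
        have h2 : ENNReal.ofReal c * Lo d ν s ≤ ENNReal.ofReal (c - 1) * hfun d ν s := by
          have h3 : ENNReal.ofReal c * Lo d ν s ≤ ENNReal.ofReal c * hfun d ν s - hfun d ν s :=
            ENNReal.le_sub_of_add_le_right (hfin s hs) h1
          refine le_trans h3 (le_of_eq ?_)
          rw [ENNReal.ofReal_sub c zero_le_one, ENNReal.ofReal_one,
            ENNReal.sub_mul (fun _ _ => hfin s hs), one_mul]
        calc 2 * ENNReal.ofReal s * Lo d ν s
            = ENNReal.ofReal (2 * s / c) * (ENNReal.ofReal c * Lo d ν s) := by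
              rw [← mul_assoc, ← ENNReal.ofReal_mul (by positivity),
                div_mul_cancel₀ _ hc.ne', ENNReal.ofReal_mul (by norm_num : (0:ℝ) ≤ 2),
                ENNReal.ofReal_ofNat]
          _ ≤ ENNReal.ofReal (2 * s / c) * (ENNReal.ofReal (c - 1) * hfun d ν s) :=
              mul_le_mul_right h2 _
          _ = ENNReal.ofReal (γ * s) * hfun d ν s := by
              rw [← mul_assoc, ← ENNReal.ofReal_mul (by positivity)]
              congr 2
              rw [hγdef]
              field_simp
      have hFadd : ∀ t : ℝ, a ≤ t → ENNReal.ofReal (t ^ 2) * hfun d ν t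
          = ENNReal.ofReal (a ^ 2) * hfun d ν a
            + ∫⁻ s in Set.Ioc a t, 2 * ENNReal.ofReal s * Lo d ν s := by
        intro t hat
        have h0t : 0 < t := lt_of_lt_of_le ha hat
        rw [F_eq hν_meas h0t, F_eq hν_meas ha,
          ← Set.Ioc_union_Ioc_eq_Ioc ha.le hat,
          lintegral_union measurableSet_Ioc (Set.Ioc_disjoint_Ioc_of_le le_rfl)]
      have hIfin : ∀ t : ℝ, a ≤ t →
          (∫⁻ s in Set.Ioc a t, 2 * ENNReal.ofReal s * Lo d ν s) ≠ ⊤ := by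
        intro t hat
        have h0t : 0 < t := lt_of_lt_of_le ha hat
        have hfin' : ENNReal.ofReal (t ^ 2) * hfun d ν t ≠ ⊤ :=
          ENNReal.mul_ne_top ENNReal.ofReal_ne_top (hfin t h0t)
        rw [hFadd t hat] at hfin'
        exact (ENNReal.add_ne_top.mp hfin').2
      set fr : ℝ → ℝ := fun t => (ENNReal.ofReal (t ^ 2) * hfun d ν t).toReal with hfrdef
      set g : ℝ → ℝ := fun s => ((2:ℝ≥0∞) * ENNReal.ofReal s * Lo d ν s).toReal with hgdef
      have hgmeas : Measurable g :=
        ((measurable_const.mul measurable_id.ennreal_ofReal).mul Lo_meas).ennreal_toReal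
      have hgI : ∀ t : ℝ, a ≤ t → (∫ s in Set.Ioc a t, g s)
          = (∫⁻ s in Set.Ioc a t, 2 * ENNReal.ofReal s * Lo d ν s).toReal := by
        intro t hat
        refine integral_toReal
          ((measurable_const.mul measurable_id.ennreal_ofReal).mul Lo_meas).aemeasurable ?_
        refine ae_restrict_of_forall_mem measurableSet_Ioc fun s hs => ?_
        have hs0 : 0 < s := lt_trans ha hs.1
        exact lt_top_iff_ne_top.mpr (ENNReal.mul_ne_top
          (ENNReal.mul_ne_top ENNReal.ofNat_ne_top ENNReal.ofReal_ne_top) (hLofin s hs0))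
      have hfr_eq : ∀ t ∈ Set.Icc a b, fr t = fr a + ∫ s in a..t, g s := by
        intro t ht
        rw [intervalIntegral.integral_of_le ht.1, hgI t ht.1, hfrdef]
        simp only []
        rw [hFadd t ht.1, ENNReal.toReal_add
          (ENNReal.mul_ne_top ENNReal.ofReal_ne_top (hfin a ha)) (hIfin t ht.1)]
      have hgint : IntegrableOn g (Set.Icc a b) volume := by
        refine Integrable.mono' (integrable_const (2 * b * (Lo d ν a).toReal))
          hgmeas.aestronglyMeasurable ?_
        refine ae_restrict_of_forall_mem measurableSet_Icc fun s hs => ?_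
        have hs0 : 0 < s := lt_of_lt_of_le ha hs.1
        rw [Real.norm_eq_abs, abs_of_nonneg ENNReal.toReal_nonneg]
        rw [ENNReal.toReal_mul, ENNReal.toReal_mul, ENNReal.toReal_ofNat,
          ENNReal.toReal_ofReal hs0.le]
        have h2 : (Lo d ν s).toReal ≤ (Lo d ν a).toReal :=
          ENNReal.toReal_mono (hLofin a ha) (Lo_anti hs.1)
        have h3 : (0:ℝ) ≤ (Lo d ν s).toReal := ENNReal.toReal_nonneg
        nlinarith [hs.2]
      have hfrcont : ContinuousOn fr (Set.Icc a b) := by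
        have hprim := intervalIntegral.continuousOn_primitive hgint
        refine ContinuousOn.congr ((continuousOn_const (c := fr a)).add hprim) fun t ht => ?_
        rw [hfr_eq t ht, intervalIntegral.integral_of_le ht.1]
        rfl
      have hkey : ∀ t ∈ Set.Icc a b, fr t ≤ fr a + γ * ∫ s in a..t, fr s / s := by
        intro t ht
        rw [hfr_eq t ht]
        refine add_le_add le_rfl ?_
        have hIccsub : Set.Icc a t ⊆ Set.Icc a b := Set.Icc_subset_Icc le_rfl ht.2
        have hfsint : IntegrableOn (fun s => γ * (fr s / s)) (Set.Ioc a t) volume := by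
          have hcont : ContinuousOn (fun s => γ * (fr s / s)) (Set.Icc a t) :=
            continuousOn_const.mul ((hfrcont.mono hIccsub).div continuousOn_id
              fun x hx => (lt_of_lt_of_le ha hx.1).ne')
          exact hcont.integrableOn_Icc.mono_set Set.Ioc_subset_Icc_self
        have hmono : (∫ s in a..t, g s) ≤ ∫ s in a..t, γ * (fr s / s) := by
          rw [intervalIntegral.integral_of_le ht.1, intervalIntegral.integral_of_le ht.1]
          refine setIntegral_mono_on
            (hgint.mono_set (Set.Ioc_subset_Icc_self.trans hIccsub)) hfsint
            measurableSet_Ioc fun s hs => ?_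
          have hs0 : 0 < s := lt_trans ha hs.1
          have hsθ : ENNReal.ofReal s < θ :=
            lt_of_le_of_lt (ENNReal.ofReal_le_ofReal (le_trans hs.2 ht.2)) hrθ
          have hEb := hLbound s hs0 hsθ
          have htR := ENNReal.toReal_mono
            (ENNReal.mul_ne_top ENNReal.ofReal_ne_top (hfin s hs0)) hEb
          rw [hgdef]
          simp only []
          refine le_trans htR (le_of_eq ?_)
          rw [ENNReal.toReal_mul, ENNReal.toReal_ofReal (by positivity), hfrdef]
          simp only []
          rw [ENNReal.toReal_mul, ENNReal.toReal_ofReal (by positivity)]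
          field_simp
        calc (∫ s in a..t, g s) ≤ ∫ s in a..t, γ * (fr s / s) := hmono
          _ = γ * ∫ s in a..t, fr s / s := by
              rw [← intervalIntegral.integral_const_mul]
      have hgr := gronwall_pow ha hab hγ0 hfrcont hkey
      -- unwrap the conclusion
      have hfb : fr b = b ^ 2 * (hfun d ν b).toReal := by
        rw [hfrdef]
        simp only []
        rw [ENNReal.toReal_mul, ENNReal.toReal_ofReal (by positivity)]
      have hfa : fr a = a ^ 2 * (hfun d ν a).toReal := by
        rw [hfrdef]
        simp only []
        rw [ENNReal.toReal_mul, ENNReal.toReal_ofReal (by positivity)]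
      have hba : b / a = lam⁻¹ := by
        rw [hadef, hbdef]
        field_simp
        exact mul_inv_cancel₀ hr.ne'
      have hexp : a ^ 2 * (b / a) ^ γ = lam ^ (2 / c) * b ^ 2 := by
        have h1 : a ^ 2 = lam ^ (2:ℝ) * b ^ 2 := by
          rw [hadef, hbdef, Real.rpow_two]
          ring
        rw [hba, Real.inv_rpow hlam.le, ← Real.rpow_neg hlam.le, h1,
          mul_assoc, mul_comm (b ^ 2), ← mul_assoc, ← Real.rpow_add hlam]
        congr 2
        rw [hγdef]
        ring
      have hreal : (hfun d ν b).toReal ≤ lam ^ (2 / c) * (hfun d ν a).toReal := by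
        have h1 : b ^ 2 * (hfun d ν b).toReal ≤ a ^ 2 * (hfun d ν a).toReal * (b / a) ^ γ := by
          rw [← hfb, ← hfa]; exact hgr
        have h2 : a ^ 2 * (hfun d ν a).toReal * (b / a) ^ γ
            = lam ^ (2 / c) * (hfun d ν a).toReal * b ^ 2 := by
          rw [mul_comm (a ^ 2) ((hfun d ν a).toReal), mul_assoc, hexp]
          ring
        have hb2 : (0:ℝ) < b ^ 2 := by positivity
        nlinarith
      calc hfun d ν r = ENNReal.ofReal ((hfun d ν b).toReal) :=
            (ENNReal.ofReal_toReal (hfin b hr)).symm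
        _ ≤ ENNReal.ofReal (lam ^ (2 / c) * (hfun d ν a).toReal) :=
            ENNReal.ofReal_le_ofReal hreal
        _ = ENNReal.ofReal (lam ^ (2 / c)) * ENNReal.ofReal ((hfun d ν a).toReal) :=
            ENNReal.ofReal_mul (by positivity)
        _ = ENNReal.ofReal (lam ^ (2 / c)) * hfun d ν (lam * r) := by
            rw [ENNReal.ofReal_toReal (hfin a ha)]
end

section
/- If h satisfies h(r) ≤ C_h λ^{α_h} h(λr) for all λ ≤ 1, r < θ_h with α_h > 1, then for all r > 0: ∫_{r ≤ |z| < θ_h} |z| ν(|z|) dz ≤ (d+2) C_h / (α_h - 1) · r h(r). -/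
open MeasureTheory ENNReal Filter Set

/-- Tail integral is bounded by `hfun`. -/
lemma tail_le_hfun (d : ℕ) (ν : ℝ → ℝ≥0∞) {s : ℝ} (hs : 0 < s) :
    (∫⁻ z in {z : EuclideanSpace ℝ (Fin d) | s ≤ ‖z‖}, ν ‖z‖) ≤ hfun d ν s := by
  have hset : MeasurableSet {z : EuclideanSpace ℝ (Fin d) | s ≤ ‖z‖} :=
    measurableSet_le measurable_const measurable_norm
  have hcong : (∫⁻ z in {z : EuclideanSpace ℝ (Fin d) | s ≤ ‖z‖}, ν ‖z‖)
      = ∫⁻ z in {z : EuclideanSpace ℝ (Fin d) | s ≤ ‖z‖},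
          min 1 (ENNReal.ofReal (‖z‖ ^ 2 / s ^ 2)) * ν ‖z‖ := by
    refine setLIntegral_congr_fun hset (fun z hz => ?_)
    have h1 : (1 : ℝ) ≤ ‖z‖ ^ 2 / s ^ 2 := by
      rw [le_div_iff₀ (by positivity)]
      have hz' : s ≤ ‖z‖ := hz
      nlinarith [norm_nonneg z]
    rw [min_eq_left (ENNReal.one_le_ofReal.mpr h1), one_mul]
  rw [hcong]
  exact setLIntegral_le_lintegral _ _

theorem stmt7 (d : ℕ) (hd : 0 < d) (ν : ℝ → ℝ≥0∞)
    (hν_meas : Measurable ν) (hν_mono : AntitoneOn ν (Set.Ici 0))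
    (hν_int : (∫⁻ x : EuclideanSpace ℝ (Fin d),
      min 1 (ENNReal.ofReal (‖x‖ ^ 2)) * ν ‖x‖) ≠ ⊤)
    (α C : ℝ) (θ : ℝ≥0∞) (hα1 : 1 < α) (hα2 : α ≤ 2) (hC : 1 ≤ C) (hθ : 0 < θ)
    (hscal : ∀ lam r : ℝ, 0 < lam → lam ≤ 1 → 0 < r → ENNReal.ofReal r < θ →
      hfun d ν r ≤ ENNReal.ofReal (C * lam ^ α) * hfun d ν (lam * r)) :
    ∀ r : ℝ, 0 < r →
      (∫⁻ z in {z : EuclideanSpace ℝ (Fin d) |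
          r ≤ ‖z‖ ∧ ENNReal.ofReal ‖z‖ < θ}, ENNReal.ofReal ‖z‖ * ν ‖z‖)
        ≤ ENNReal.ofReal ((d + 2) * C / (α - 1) * r) * hfun d ν r := by
  intro r hr
  set E := EuclideanSpace ℝ (Fin d)
  have hgm : Measurable fun z : E => ν ‖z‖ := hν_meas.comp measurable_norm
  set S : Set E := {z | r ≤ ‖z‖ ∧ ENNReal.ofReal ‖z‖ < θ} with hSdef
  have hSm : MeasurableSet S := by
    have h1 : S = {z : E | r ≤ ‖z‖} ∩ (fun z : E => ENNReal.ofReal ‖z‖) ⁻¹' Iio θ := rfl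
    rw [h1]
    exact (measurableSet_le measurable_const measurable_norm).inter
      ((ENNReal.measurable_ofReal.comp measurable_norm) measurableSet_Iio)
  set μ' : Measure E := (volume.restrict S).withDensity (fun z => ν ‖z‖) with hμ'def
  have hμ'apply : ∀ A : Set E, MeasurableSet A → μ' A = ∫⁻ z in A ∩ S, ν ‖z‖ := by
    intro A hA
    rw [hμ'def, withDensity_apply _ hA, Measure.restrict_restrict hA]
  -- scaling
  have hsc : ∀ t : ℝ, r ≤ t → ENNReal.ofReal t < θ →
      hfun d ν t ≤ ENNReal.ofReal (C * (r / t) ^ α) * hfun d ν r := by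
    intro t hrt hθt
    have ht0 : 0 < t := hr.trans_le hrt
    have := hscal (r / t) t (by positivity) (div_le_one_of_le₀ hrt ht0.le) ht0 hθt
    rwa [div_mul_cancel₀ _ ht0.ne'] at this
  -- total mass bound
  have hμ'univ : μ' univ ≤ hfun d ν r := by
    rw [hμ'apply univ MeasurableSet.univ, univ_inter]
    refine le_trans (lintegral_mono_set ?_) (tail_le_hfun d ν hr)
    exact fun z hz => hz.1
  -- rewrite LHS via layer cake
  have h1 : (∫⁻ z in S, ENNReal.ofReal ‖z‖ * ν ‖z‖)
      = ∫⁻ z, ENNReal.ofReal ‖z‖ ∂μ' := by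
    rw [hμ'def, lintegral_withDensity_eq_lintegral_mul _ hgm
      measurable_norm.ennreal_ofReal]
    exact lintegral_congr fun z => (mul_comm _ _)
  have h2 : (∫⁻ z, ENNReal.ofReal ‖z‖ ∂μ')
      = ∫⁻ t in Ioi (0 : ℝ), μ' {z : E | t < ‖z‖} :=
    lintegral_eq_lintegral_meas_lt μ' (ae_of_all _ fun z => norm_nonneg z)
      measurable_norm.aemeasurable
  -- split the t-integral
  have hsplit : (∫⁻ t in Ioi (0 : ℝ), μ' {z : E | t < ‖z‖})
      = (∫⁻ t in Ioc (0 : ℝ) r, μ' {z : E | t < ‖z‖})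
        + ∫⁻ t in Ioi r, μ' {z : E | t < ‖z‖} := by
    rw [← Ioc_union_Ioi_eq_Ioi hr.le,
      lintegral_union measurableSet_Ioi (Set.Ioc_disjoint_Ioi le_rfl)]
  -- part 1
  have hpart1 : (∫⁻ t in Ioc (0 : ℝ) r, μ' {z : E | t < ‖z‖})
      ≤ ENNReal.ofReal r * hfun d ν r := by
    calc (∫⁻ t in Ioc (0 : ℝ) r, μ' {z : E | t < ‖z‖})
        ≤ ∫⁻ _ in Ioc (0 : ℝ) r, hfun d ν r :=
          lintegral_mono fun t => le_trans (measure_mono (subset_univ _)) hμ'univ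
      _ = ENNReal.ofReal r * hfun d ν r := by
          rw [setLIntegral_const, Real.volume_Ioc, mul_comm]
          norm_num
  -- part 2 pointwise bound
  have hmid : ∀ t ∈ Ioi r, μ' {z : E | t < ‖z‖}
      ≤ ENNReal.ofReal (C * (r / t) ^ α) * hfun d ν r := by
    intro t ht
    have ht0 : 0 < t := hr.trans ht
    rw [hμ'apply _ (measurableSet_lt measurable_const measurable_norm)]
    by_cases hθt : ENNReal.ofReal t < θ
    · refine le_trans ?_ (hsc t (le_of_lt ht) hθt)
      refine le_trans (lintegral_mono_set ?_) (tail_le_hfun d ν ht0)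
      intro z hz
      exact le_of_lt (show t < ‖z‖ from hz.1)
    · have hempty : {z : E | t < ‖z‖} ∩ S = ∅ := by
        rw [eq_empty_iff_forall_notMem]
        intro z hz
        have h1 : t < ‖z‖ := hz.1
        have h3 : ENNReal.ofReal ‖z‖ < θ := hz.2.2
        have h4 : ENNReal.ofReal ‖z‖ < ENNReal.ofReal t := lt_of_lt_of_le h3 (not_lt.mp hθt)
        have h5 := (ENNReal.ofReal_lt_ofReal_iff_of_nonneg (norm_nonneg z)).mp h4
        linarith
      rw [hempty]
      simp
  -- measurability of the bounding function
  have hbm : Measurable fun t : ℝ => ENNReal.ofReal (C * (r / t) ^ α) := by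
    apply ENNReal.measurable_ofReal.comp
    exact ((measurable_const.div measurable_id).pow measurable_const).const_mul C
  -- part 2 integral computation
  have hJ : (∫⁻ t in Ioi r, ENNReal.ofReal (C * (r / t) ^ α))
      = ENNReal.ofReal (C * r ^ α * (r ^ (1 - α) / (α - 1))) := by
    have hcongr : ∀ t ∈ Ioi r, ENNReal.ofReal (C * (r / t) ^ α)
        = ENNReal.ofReal (C * r ^ α * t ^ (-α)) := by
      intro t ht
      have ht0 : 0 < t := hr.trans ht
      congr 1
      rw [Real.div_rpow hr.le ht0.le, Real.rpow_neg ht0.le]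
      ring
    rw [setLIntegral_congr_fun measurableSet_Ioi hcongr]
    have hint : IntegrableOn (fun t : ℝ => C * r ^ α * t ^ (-α)) (Ioi r) :=
      (integrableOn_Ioi_rpow_of_lt (by linarith) hr).const_mul _
    have hnn : 0 ≤ᵐ[volume.restrict (Ioi r)] fun t : ℝ => C * r ^ α * t ^ (-α) := by
      refine (ae_restrict_iff' measurableSet_Ioi).mpr (ae_of_all _ fun t ht => ?_)
      have ht0 : 0 < t := hr.trans ht
      have hC0 : (0 : ℝ) < C := lt_of_lt_of_le one_pos hC
      positivity
    rw [← ofReal_integral_eq_lintegral_ofReal hint hnn, MeasureTheory.integral_const_mul,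
      integral_Ioi_rpow_of_lt (by linarith) hr]
    congr 1
    rw [show (-α + 1) = -(α - 1) by ring, show (1 - α) = -(α - 1) by ring,
      neg_div_neg_eq]
  have hpart2 : (∫⁻ t in Ioi r, μ' {z : E | t < ‖z‖})
      ≤ ENNReal.ofReal (C * r ^ α * (r ^ (1 - α) / (α - 1))) * hfun d ν r := by
    calc (∫⁻ t in Ioi r, μ' {z : E | t < ‖z‖})
        ≤ ∫⁻ t in Ioi r, ENNReal.ofReal (C * (r / t) ^ α) * hfun d ν r :=
          setLIntegral_mono (hbm.mul_const _) hmid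
      _ = (∫⁻ t in Ioi r, ENNReal.ofReal (C * (r / t) ^ α)) * hfun d ν r :=
          lintegral_mul_const _ hbm
      _ = ENNReal.ofReal (C * r ^ α * (r ^ (1 - α) / (α - 1))) * hfun d ν r := by rw [hJ]
  -- combine
  have hb : C * r ^ α * (r ^ (1 - α) / (α - 1)) = C * r / (α - 1) := by
    have h : r ^ α * r ^ (1 - α) = r := by
      rw [← Real.rpow_add hr, show α + (1 - α) = 1 by ring, Real.rpow_one]
    calc C * r ^ α * (r ^ (1 - α) / (α - 1))
        = C * (r ^ α * r ^ (1 - α)) / (α - 1) := by ring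
      _ = C * r / (α - 1) := by rw [h]
  have hfinal : r + C * r / (α - 1) ≤ (d + 2) * C / (α - 1) * r := by
    have hd' : (1 : ℝ) ≤ d := by exact_mod_cast hd
    have hα0 : (0 : ℝ) < α - 1 := by linarith
    rw [div_mul_eq_mul_div, le_div_iff₀ hα0, add_mul, div_mul_cancel₀ _ hα0.ne']
    nlinarith [mul_le_mul_of_nonneg_left (show α - 1 ≤ C by linarith) hr.le,
      mul_nonneg (mul_nonneg (show (0:ℝ) ≤ (d:ℝ) by linarith) (show (0:ℝ) ≤ C by linarith))
        hr.le]
  calc (∫⁻ z in S, ENNReal.ofReal ‖z‖ * ν ‖z‖)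
      = (∫⁻ t in Ioc (0 : ℝ) r, μ' {z : E | t < ‖z‖})
        + ∫⁻ t in Ioi r, μ' {z : E | t < ‖z‖} := by rw [h1, h2, hsplit]
    _ ≤ ENNReal.ofReal r * hfun d ν r
        + ENNReal.ofReal (C * r ^ α * (r ^ (1 - α) / (α - 1))) * hfun d ν r :=
          add_le_add hpart1 hpart2
    _ = ENNReal.ofReal (r + C * r / (α - 1)) * hfun d ν r := by
          rw [hb, ← add_mul, ← ENNReal.ofReal_add hr.le
            (div_nonneg (by nlinarith) (by linarith))]
    _ ≤ ENNReal.ofReal ((d + 2) * C / (α - 1) * r) * hfun d ν r :=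
          mul_le_mul_left (ENNReal.ofReal_le_ofReal hfinal) _
end

section
/- If h satisfies c_h λ^{β_h} h(λr) ≤ h(r) for all λ ≤ 1, r < θ_h with β_h < 1, then for all r < θ_h: ∫_{|z| < r} |z| ν(|z|) dz ≤ (d+2)/(c_h (1-β_h)) · r h(r). -/
open MeasureTheory ENNReal Filter Set

theorem stmt8 (d : ℕ) (hd : 0 < d) (ν : ℝ → ℝ≥0∞)
    (hν_meas : Measurable ν) (hν_mono : AntitoneOn ν (Set.Ici 0))
    (hν_int : (∫⁻ x : EuclideanSpace ℝ (Fin d),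
      min 1 (ENNReal.ofReal (‖x‖ ^ 2)) * ν ‖x‖) ≠ ⊤)
    (β c : ℝ) (θ : ℝ≥0∞) (hβ : 0 < β) (hβ1 : β < 1) (hc : 0 < c) (hc1 : c ≤ 1)
    (hθ : 0 < θ)
    (hscal : ∀ lam r : ℝ, 0 < lam → lam ≤ 1 → 0 < r → ENNReal.ofReal r < θ →
      ENNReal.ofReal (c * lam ^ β) * hfun d ν (lam * r) ≤ hfun d ν r) :
    ∀ r : ℝ, 0 < r → ENNReal.ofReal r < θ →
      (∫⁻ z in {z : EuclideanSpace ℝ (Fin d) | ‖z‖ < r},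
          ENNReal.ofReal ‖z‖ * ν ‖z‖)
        ≤ ENNReal.ofReal ((d + 2) / (c * (1 - β)) * r) * hfun d ν r := by
  intro r hr hrθ
  set E := EuclideanSpace ℝ (Fin d) with hE
  have hgmeas : Measurable (fun z : E => ν ‖z‖) := hν_meas.comp measurable_norm
  have hS : MeasurableSet {z : E | ‖z‖ < r} :=
    measurableSet_lt measurable_norm measurable_const
  have hAt : ∀ t : ℝ, MeasurableSet {z : E | t < ‖z‖} := fun t =>
    measurableSet_lt measurable_const measurable_norm
  set μ : Measure E := (volume.restrict {z : E | ‖z‖ < r}).withDensity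
    (fun z => ν ‖z‖) with hμ
  have hCalc : ∀ t : ℝ, μ {z : E | t < ‖z‖}
      = ∫⁻ z in {z : E | t < ‖z‖} ∩ {z : E | ‖z‖ < r}, ν ‖z‖ := by
    intro t
    rw [hμ, withDensity_apply _ (hAt t), Measure.restrict_restrict (hAt t)]
  have step1 : (∫⁻ z in {z : E | ‖z‖ < r}, ENNReal.ofReal ‖z‖ * ν ‖z‖)
      = ∫⁻ t in Ioi (0:ℝ), μ {z : E | t < ‖z‖} := by
    rw [← lintegral_eq_lintegral_meas_lt μ (ae_of_all _ fun z => norm_nonneg z)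
      measurable_norm.aemeasurable, hμ,
      lintegral_withDensity_eq_lintegral_mul _ hgmeas
        measurable_norm.ennreal_ofReal]
    exact lintegral_congr fun z => mul_comm _ _
  have hzero : ∫⁻ t in Ioi r, μ {z : E | t < ‖z‖} = 0 := by
    rw [setLIntegral_congr_fun_ae measurableSet_Ioi
      (ae_of_all _ fun t (ht : r < t) => ?_), lintegral_zero]
    rw [hCalc]
    have hemp : {z : E | t < ‖z‖} ∩ {z : E | ‖z‖ < r} = ∅ := by
      ext z; simp only [mem_inter_iff, mem_setOf_eq, mem_empty_iff_false, iff_false,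
        not_and, not_lt]
      intro hz; linarith
    rw [hemp, Measure.restrict_empty, lintegral_zero_measure]
  have hsplit : (∫⁻ t in Ioi (0:ℝ), μ {z : E | t < ‖z‖})
      = ∫⁻ t in Ioc 0 r, μ {z : E | t < ‖z‖} := by
    rw [← Ioc_union_Ioi_eq_Ioi hr.le,
      lintegral_union measurableSet_Ioi (Ioc_disjoint_Ioi le_rfl), hzero, add_zero]
  -- pointwise bound on (0, r]
  have hbound : ∀ t ∈ Ioc (0:ℝ) r, μ {z : E | t < ‖z‖}
      ≤ ENNReal.ofReal ((c * (t / r) ^ β)⁻¹) * hfun d ν r := by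
    intro t ht
    obtain ⟨ht0, htr⟩ := ht
    have h1 : μ {z : E | t < ‖z‖} ≤ hfun d ν t := by
      rw [hCalc]
      have : (∫⁻ z in {z : E | t < ‖z‖} ∩ {z : E | ‖z‖ < r}, ν ‖z‖)
          = ∫⁻ z in {z : E | t < ‖z‖} ∩ {z : E | ‖z‖ < r},
              min 1 (ENNReal.ofReal (‖z‖ ^ 2 / t ^ 2)) * ν ‖z‖ := by
        apply setLIntegral_congr_fun_ae ((hAt t).inter hS)
        refine ae_of_all _ fun z hz => ?_
        have h2 : (1:ℝ) ≤ ‖z‖ ^ 2 / t ^ 2 :=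
          (one_le_div (by positivity)).mpr (pow_le_pow_left₀ ht0.le hz.1.le 2)
        rw [min_eq_left (ENNReal.one_le_ofReal.mpr h2), one_mul]
      rw [this]
      exact setLIntegral_le_lintegral _ _
    have hlam : 0 < t / r := div_pos ht0 hr
    have key := hscal (t / r) r hlam ((div_le_one hr).mpr htr) hr hrθ
    rw [div_mul_cancel₀ _ hr.ne'] at key
    have hpos : 0 < c * (t / r) ^ β := by positivity
    calc μ {z : E | t < ‖z‖} ≤ hfun d ν t := h1
      _ ≤ ENNReal.ofReal ((c * (t / r) ^ β)⁻¹) * hfun d ν r := by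
          rw [ENNReal.ofReal_inv_of_pos hpos, ← ENNReal.div_eq_inv_mul]
          rw [ENNReal.le_div_iff_mul_le (Or.inl (by positivity))
            (Or.inl ENNReal.ofReal_ne_top), mul_comm]
          exact key
  -- integrate the bound
  have hconst : ∫⁻ t in Ioc (0:ℝ) r, ENNReal.ofReal ((c * (t / r) ^ β)⁻¹)
      = ENNReal.ofReal (r / (c * (1 - β))) := by
    have hcongr : ∀ᵐ t ∂(volume : Measure ℝ), t ∈ Ioc (0:ℝ) r →
        ENNReal.ofReal ((c * (t / r) ^ β)⁻¹)
          = ENNReal.ofReal (c⁻¹ * r ^ β) * ENNReal.ofReal (t ^ (-β)) := by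
      refine ae_of_all _ fun t ht => ?_
      rw [← ENNReal.ofReal_mul (by positivity)]
      congr 1
      rw [Real.div_rpow ht.1.le hr.le, Real.rpow_neg ht.1.le, mul_inv, inv_div]
      ring
    rw [setLIntegral_congr_fun_ae measurableSet_Ioc hcongr,
      lintegral_const_mul' _ _ ENNReal.ofReal_ne_top]
    have hInt : IntegrableOn (fun t : ℝ => t ^ (-β)) (Ioc 0 r) := by
      have := intervalIntegral.intervalIntegrable_rpow' (a := 0) (b := r) (show (-1:ℝ) < -β by linarith)
      rwa [intervalIntegrable_iff_integrableOn_Ioc_of_le hr.le] at this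
    have hnn : 0 ≤ᵐ[volume.restrict (Ioc (0:ℝ) r)] fun t : ℝ => t ^ (-β) := by
      rw [EventuallyLE, ae_restrict_iff' measurableSet_Ioc]
      exact ae_of_all _ fun t ht => Real.rpow_nonneg ht.1.le _
    rw [← ofReal_integral_eq_lintegral_ofReal hInt hnn]
    have hval : ∫ t in Ioc (0:ℝ) r, t ^ (-β) = r ^ (1 - β) / (1 - β) := by
      rw [← intervalIntegral.integral_of_le hr.le,
        integral_rpow (Or.inl (by linarith))]
      rw [Real.zero_rpow (by linarith : (0:ℝ) < -β + 1).ne']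
      rw [show -β + 1 = 1 - β by ring]
      ring
    rw [hval, ← ENNReal.ofReal_mul (by positivity)]
    congr 1
    have hrr : r ^ β * r ^ (1 - β) = r := by
      rw [← Real.rpow_add hr]; norm_num
    have hcne : c ≠ 0 := hc.ne'
    have hbne : (1:ℝ) - β ≠ 0 := by linarith
    have : c⁻¹ * r ^ β * (r ^ (1 - β) / (1 - β)) = (r ^ β * r ^ (1 - β)) / (c * (1 - β)) := by
      field_simp
    rw [this, hrr]
  calc (∫⁻ z in {z : E | ‖z‖ < r}, ENNReal.ofReal ‖z‖ * ν ‖z‖)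
      = ∫⁻ t in Ioc (0:ℝ) r, μ {z : E | t < ‖z‖} := by rw [step1, hsplit]
    _ ≤ ∫⁻ t in Ioc (0:ℝ) r, ENNReal.ofReal ((c * (t / r) ^ β)⁻¹) * hfun d ν r := by
        refine lintegral_mono_ae ?_
        rw [ae_restrict_iff' measurableSet_Ioc]
        exact ae_of_all _ hbound
    _ = (∫⁻ t in Ioc (0:ℝ) r, ENNReal.ofReal ((c * (t / r) ^ β)⁻¹)) * hfun d ν r := by
        exact lintegral_mul_const'' _ ((measurable_const.mul
          ((measurable_id.div_const r).pow_const β)).inv.ennreal_ofReal).aemeasurable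
    _ = ENNReal.ofReal (r / (c * (1 - β))) * hfun d ν r := by rw [hconst]
    _ ≤ ENNReal.ofReal ((d + 2) / (c * (1 - β)) * r) * hfun d ν r := by
        refine mul_le_mul_left (ENNReal.ofReal_le_ofReal ?_) _
        have hden : 0 < c * (1 - β) := mul_pos hc (by linarith)
        rw [div_mul_eq_mul_div, div_le_div_iff₀ hden hden]
        nlinarith [mul_nonneg (mul_nonneg (by positivity : (0:ℝ) ≤ (d:ℝ) + 1) hr.le) hden.le]
end

section
/- For every fixed t > 0 there is a unique r_0 > 0 solving t K(r) r^{-d} = [h^{-1}(1/t)]^{-d}, and r_0 ∈ [h^{-1}(3/t), h^{-1}(1/t)]. -/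
open MeasureTheory ENNReal Filter Set Topology

namespace Stmt10Aux

noncomputable def μm (d : ℕ) : Measure ℝ :=
  Measure.map (fun x : EuclideanSpace ℝ (Fin d) => ‖x‖) volume

lemma μm_apply (d : ℕ) {A : Set ℝ} (hA : MeasurableSet A) :
    μm d A = volume {x : EuclideanSpace ℝ (Fin d) | ‖x‖ ∈ A} :=
  Measure.map_apply measurable_norm hA

lemma lintegral_μm (d : ℕ) {f : ℝ → ℝ≥0∞} (hf : Measurable f) :
    ∫⁻ s, f s ∂(μm d) = ∫⁻ x : EuclideanSpace ℝ (Fin d), f ‖x‖ :=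
  lintegral_map hf measurable_norm

lemma setLIntegral_μm (d : ℕ) {f : ℝ → ℝ≥0∞} (hf : Measurable f) {A : Set ℝ}
    (hA : MeasurableSet A) :
    ∫⁻ s in A, f s ∂(μm d) = ∫⁻ x in {x : EuclideanSpace ℝ (Fin d) | ‖x‖ ∈ A}, f ‖x‖ :=
  setLIntegral_map hA hf measurable_norm

lemma μm_Iio_zero (d : ℕ) : μm d (Iio 0) = 0 := by
  rw [μm_apply d measurableSet_Iio]
  convert measure_empty (μ := (volume : Measure (EuclideanSpace ℝ (Fin d))))
  ext x
  simp [mem_Iio, not_lt.2 (norm_nonneg x)]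

lemma μm_ae_nonneg (d : ℕ) : ∀ᵐ s ∂(μm d), 0 ≤ s := by
  rw [ae_iff]
  have : {a : ℝ | ¬ 0 ≤ a} = Iio 0 := by ext s; simp only [mem_setOf_eq, mem_Iio, not_le]
  rw [this]; exact μm_Iio_zero d

instance (d : ℕ) : SigmaFinite (μm d) := by
  refine ⟨⟨⟨fun n => Iic (n : ℝ), fun _ => trivial, fun n => ?_, ?_⟩⟩⟩
  · rw [μm_apply d measurableSet_Iic]
    have : {x : EuclideanSpace ℝ (Fin d) | ‖x‖ ∈ Iic (n : ℝ)} = Metric.closedBall 0 n := by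
      ext x; simp [Metric.mem_closedBall, dist_zero_right]
    rw [this]
    exact measure_closedBall_lt_top
  · ext x
    simp only [mem_iUnion, mem_Iic, mem_univ, iff_true]
    exact ⟨⌈x⌉₊, Nat.le_ceil x⟩

lemma μm_Ioo_pos (d : ℕ) (hd : 0 < d) {a b : ℝ} (ha : 0 ≤ a) (hab : a < b) :
    0 < μm d (Ioo a b) := by
  rw [μm_apply d measurableSet_Ioo]
  have hopen : IsOpen {x : EuclideanSpace ℝ (Fin d) | ‖x‖ ∈ Ioo a b} := by
    have : {x : EuclideanSpace ℝ (Fin d) | ‖x‖ ∈ Ioo a b} =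
        (fun x : EuclideanSpace ℝ (Fin d) => ‖x‖) ⁻¹' (Ioo a b) := rfl
    rw [this]
    exact isOpen_Ioo.preimage continuous_norm
  refine hopen.measure_pos volume ?_
  refine ⟨((a + b) / 2) • EuclideanSpace.single (⟨0, hd⟩ : Fin d) (1 : ℝ), ?_⟩
  have h1 : ‖EuclideanSpace.single (⟨0, hd⟩ : Fin d) (1 : ℝ)‖ = 1 := by
    rw [EuclideanSpace.norm_single]; norm_num
  have hmid : 0 ≤ (a + b) / 2 := by linarith
  simp only [mem_setOf_eq, norm_smul, h1, mul_one, Real.norm_eq_abs, abs_of_nonneg hmid]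
  constructor <;> [skip; skip] <;> linarith

lemma μm_scale (d : ℕ) {c : ℝ} (hc : 0 < c) {f : ℝ → ℝ≥0∞} (hf : Measurable f) :
    ∫⁻ s, f s ∂(μm d) = ENNReal.ofReal (c ^ d) * ∫⁻ u, f (c * u) ∂(μm d) := by
  have h1 : ∫⁻ u, f (c * u) ∂(μm d)
      = ∫⁻ x : EuclideanSpace ℝ (Fin d), f (c * ‖x‖) := by
    exact lintegral_map (hf.comp (measurable_const_mul c)) measurable_norm
  have h2 : ∀ x : EuclideanSpace ℝ (Fin d), f (c * ‖x‖) = f ‖c • x‖ := by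
    intro x
    rw [norm_smul, Real.norm_eq_abs, abs_of_pos hc]
  have h3 : ∫⁻ x : EuclideanSpace ℝ (Fin d), f ‖c • x‖
      = ∫⁻ y, (fun y : EuclideanSpace ℝ (Fin d) => f ‖y‖) y
          ∂(Measure.map (c • · : EuclideanSpace ℝ (Fin d) → _) volume) := by
    exact (lintegral_map (hf.comp measurable_norm) (measurable_const_smul c)).symm
  rw [h1]
  simp only [h2]
  rw [h3, Measure.map_addHaar_smul volume (ne_of_gt hc), lintegral_smul_measure]
  rw [← lintegral_μm d hf]
  rw [smul_eq_mul, ← mul_assoc, ← ENNReal.ofReal_mul (by positivity)]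
  have hfr : Module.finrank ℝ (EuclideanSpace ℝ (Fin d)) = d := finrank_euclideanSpace_fin
  rw [hfr, abs_of_nonneg (by positivity : (0:ℝ) ≤ ((c:ℝ) ^ d)⁻¹)]
  rw [mul_inv_cancel₀ (by positivity), ENNReal.ofReal_one, one_mul]

noncomputable def Ffun (d : ℕ) (ν : ℝ → ℝ≥0∞) (r : ℝ) : ℝ≥0∞ :=
  ∫⁻ s in Ioo 0 r, ENNReal.ofReal (s ^ 2) * ν s ∂(μm d)

noncomputable def Tfun (d : ℕ) (ν : ℝ → ℝ≥0∞) (r : ℝ) : ℝ≥0∞ :=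
  ∫⁻ s in Ici r, ν s ∂(μm d)

noncomputable def Gfun (d : ℕ) (ν : ℝ → ℝ≥0∞) (r : ℝ) : ℝ≥0∞ :=
  ∫⁻ u in Ioo 0 1, ENNReal.ofReal (u ^ 2) * ν (r * u) ∂(μm d)

noncomputable def Hμ (d : ℕ) (ν : ℝ → ℝ≥0∞) : ℝ≥0∞ :=
  ∫⁻ s, min 1 (ENNReal.ofReal (s ^ 2)) * ν s ∂(μm d)

section

variable {d : ℕ} {ν : ℝ → ℝ≥0∞}

lemma meas_sq : Measurable fun s : ℝ => ENNReal.ofReal (s ^ 2) :=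
  (measurable_id.pow_const 2).ennreal_ofReal

lemma meas_sqν (hν : Measurable ν) : Measurable fun s : ℝ => ENNReal.ofReal (s ^ 2) * ν s :=
  meas_sq.mul hν

lemma meas_minν (hν : Measurable ν) (r : ℝ) :
    Measurable fun s : ℝ => min 1 (ENNReal.ofReal (s ^ 2 / r ^ 2)) * ν s :=
  (measurable_const.min ((measurable_id.pow_const 2).div_const (r ^ 2)).ennreal_ofReal).mul hν

lemma hfun_μm (hν : Measurable ν) (r : ℝ) :
    hfun d ν r = ∫⁻ s, min 1 (ENNReal.ofReal (s ^ 2 / r ^ 2)) * ν s ∂(μm d) :=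
  (lintegral_μm d (meas_minν hν r)).symm

lemma Hμ_eq (hν : Measurable ν) :
    Hμ d ν = ∫⁻ x : EuclideanSpace ℝ (Fin d), min 1 (ENNReal.ofReal (‖x‖ ^ 2)) * ν ‖x‖ :=
  lintegral_μm d ((measurable_const.min meas_sq).mul hν)

lemma Kfun_μm (hν : Measurable ν) (r : ℝ) :
    Kfun d ν r
      = (ENNReal.ofReal (r ^ 2))⁻¹ * ∫⁻ s in Iio r, ENNReal.ofReal (s ^ 2) * ν s ∂(μm d) := by
  rw [Kfun, setLIntegral_μm d (meas_sqν hν) measurableSet_Iio]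
  rfl

lemma setLIntegral_Iio_eq_Ioo {r : ℝ} (hr : 0 < r) {f : ℝ → ℝ≥0∞} (hf0 : f 0 = 0) :
    ∫⁻ s in Iio r, f s ∂(μm d) = ∫⁻ s in Ioo 0 r, f s ∂(μm d) := by
  have hsplit : Iio r = Iic 0 ∪ Ioo 0 r := by
    ext s; simp only [mem_Iio, mem_union, mem_Iic, mem_Ioo]
    constructor
    · intro h; rcases le_or_gt s 0 with h0 | h0
      · exact Or.inl h0
      · exact Or.inr ⟨h0, h⟩
    · rintro (h | ⟨_, h⟩); exacts [lt_of_le_of_lt h hr, h]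
  have hdisj : Disjoint (Iic 0) (Ioo 0 r) := by
    apply Set.disjoint_left.2
    rintro s hs ⟨hs', _⟩; exact absurd hs (not_le.2 hs')
  rw [hsplit, lintegral_union measurableSet_Ioo hdisj]
  have h0 : ∫⁻ s in Iic 0, f s ∂(μm d) = 0 := by
    rw [← lintegral_zero (μ := (μm d).restrict (Iic 0))]
    apply lintegral_congr_ae
    show ∀ᵐ s ∂(μm d).restrict (Iic 0), f s = 0
    rw [ae_restrict_iff' measurableSet_Iic]
    filter_upwards [μm_ae_nonneg d] with s hs hs'
    have : s = 0 := le_antisymm hs' hs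
    rw [this, hf0]
  rw [h0, zero_add]

lemma Kfun_decomp (hν : Measurable ν) {r : ℝ} (hr : 0 < r) :
    Kfun d ν r = (ENNReal.ofReal (r ^ 2))⁻¹ * Ffun d ν r := by
  rw [Kfun_μm hν, Ffun, setLIntegral_Iio_eq_Ioo hr (by simp)]

lemma hfun_decomp (hν : Measurable ν) {r : ℝ} (hr : 0 < r) :
    hfun d ν r = (ENNReal.ofReal (r ^ 2))⁻¹ * Ffun d ν r + Tfun d ν r := by
  rw [hfun_μm hν]
  rw [← lintegral_add_compl (fun s => min 1 (ENNReal.ofReal (s ^ 2 / r ^ 2)) * ν s)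
    (measurableSet_Iio (a := r)), compl_Iio]
  have hIio : ∫⁻ s in Iio r, min 1 (ENNReal.ofReal (s ^ 2 / r ^ 2)) * ν s ∂(μm d)
      = (ENNReal.ofReal (r ^ 2))⁻¹ * Ffun d ν r := by
    rw [setLIntegral_Iio_eq_Ioo hr (by simp)]
    have hcong : ∀ s ∈ Ioo (0:ℝ) r,
        min 1 (ENNReal.ofReal (s ^ 2 / r ^ 2)) * ν s
          = (ENNReal.ofReal (r ^ 2))⁻¹ * (ENNReal.ofReal (s ^ 2) * ν s) := by
      intro s hs
      have hs2 : s ^ 2 < r ^ 2 := by nlinarith [hs.1, hs.2]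
      have hr2 : (0:ℝ) < r ^ 2 := by positivity
      have hmin : min 1 (ENNReal.ofReal (s ^ 2 / r ^ 2)) = ENNReal.ofReal (s ^ 2 / r ^ 2) := by
        apply min_eq_right
        rw [← ENNReal.ofReal_one]
        exact ENNReal.ofReal_le_ofReal (by rw [div_le_one hr2]; exact hs2.le)
      rw [hmin, div_eq_mul_inv, ENNReal.ofReal_mul (by positivity),
        ENNReal.ofReal_inv_of_pos hr2, mul_comm (ENNReal.ofReal (s ^ 2)), mul_assoc]
    rw [setLIntegral_congr_fun measurableSet_Ioo hcong, Ffun,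
      lintegral_const_mul _ (meas_sqν hν)]
  have hIci : ∫⁻ s in Ici r, min 1 (ENNReal.ofReal (s ^ 2 / r ^ 2)) * ν s ∂(μm d)
      = Tfun d ν r := by
    apply setLIntegral_congr_fun measurableSet_Ici
    intro s hs
    dsimp only
    have h1 : (1:ℝ) ≤ s ^ 2 / r ^ 2 := by
      rw [le_div_iff₀ (by positivity)]
      have : r ≤ s := hs
      nlinarith [hr]
    rw [min_eq_left (by rwa [← ENNReal.ofReal_one, ENNReal.ofReal_le_ofReal_iff (by positivity)]),
      one_mul]
  rw [hIio, hIci]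

lemma Ffun_scale (hν : Measurable ν) {r : ℝ} (hr : 0 < r) :
    Ffun d ν r = ENNReal.ofReal (r ^ (d + 2)) * Gfun d ν r := by
  have key := μm_scale d hr (f := (Ioo (0:ℝ) r).indicator fun s => ENNReal.ofReal (s ^ 2) * ν s)
    ((meas_sqν hν).indicator measurableSet_Ioo)
  rw [lintegral_indicator measurableSet_Ioo] at key
  have hind : ∀ u : ℝ, (Ioo (0:ℝ) r).indicator (fun s => ENNReal.ofReal (s ^ 2) * ν s) (r * u)
      = (Ioo (0:ℝ) 1).indicator
          (fun u => ENNReal.ofReal (r ^ 2) * (ENNReal.ofReal (u ^ 2) * ν (r * u))) u := by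
    intro u
    have hmem : r * u ∈ Ioo (0:ℝ) r ↔ u ∈ Ioo (0:ℝ) 1 := by
      constructor
      · rintro ⟨h1, h2⟩
        have hu : 0 < u := by by_contra hc; push_neg at hc; nlinarith
        exact ⟨hu, by nlinarith⟩
      · rintro ⟨h1, h2⟩
        exact ⟨by positivity, by nlinarith⟩
    by_cases h : u ∈ Ioo (0:ℝ) 1
    · rw [indicator_of_mem h, indicator_of_mem (hmem.2 h), mul_pow,
        ENNReal.ofReal_mul (by positivity), mul_assoc]
    · rw [indicator_of_notMem h, indicator_of_notMem (fun hc => h (hmem.1 hc))]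
  simp only [hind] at key
  have hmeas : Measurable fun u : ℝ => ENNReal.ofReal (u ^ 2) * ν (r * u) :=
    meas_sq.mul (hν.comp (measurable_const_mul r))
  rw [lintegral_indicator measurableSet_Ioo, lintegral_const_mul _ hmeas] at key
  have hmm : ENNReal.ofReal (r ^ d) * ENNReal.ofReal (r ^ 2) = ENNReal.ofReal (r ^ (d + 2)) := by
    rw [← ENNReal.ofReal_mul (by positivity : (0:ℝ) ≤ r ^ d), ← pow_add]
  rw [Ffun, key, ← mul_assoc, hmm]
  rfl

lemma Gfun_antitone (hν_mono : AntitoneOn ν (Set.Ici 0)) {r₁ r₂ : ℝ}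
    (h1 : 0 < r₁) (h12 : r₁ ≤ r₂) : Gfun d ν r₂ ≤ Gfun d ν r₁ := by
  apply setLIntegral_mono' measurableSet_Ioo
  intro u hu
  refine mul_le_mul_right ?_ _
  exact hν_mono (mem_Ici.2 (by nlinarith [hu.1] : (0:ℝ) ≤ r₁ * u))
    (mem_Ici.2 (by nlinarith [hu.1] : (0:ℝ) ≤ r₂ * u))
    (by nlinarith [hu.1])

end

section
variable {d : ℕ} {ν : ℝ → ℝ≥0∞}

lemma min_one_ofReal {x : ℝ} :
    min 1 (ENNReal.ofReal x) = ENNReal.ofReal (min 1 x) := by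
  rcases le_total 1 x with h | h
  · rw [min_eq_left h, min_eq_left (ENNReal.one_le_ofReal.2 h), ENNReal.ofReal_one]
  · rw [min_eq_right h, min_eq_right (ENNReal.ofReal_le_one.2 h)]

lemma Ffun_le (hν : Measurable ν) (r : ℝ) :
    Ffun d ν r ≤ ENNReal.ofReal (max 1 (r ^ 2)) * Hμ d ν := by
  rw [Hμ, ← lintegral_const_mul' _ _ ENNReal.ofReal_ne_top]
  refine le_trans (setLIntegral_mono' measurableSet_Ioo fun s hs => ?_)
    (setLIntegral_le_lintegral _ _)
  rw [min_one_ofReal, ← mul_assoc,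
    ← ENNReal.ofReal_mul (le_trans zero_le_one (le_max_left 1 (r ^ 2)))]
  refine mul_le_mul_left (ENNReal.ofReal_le_ofReal ?_) _
  rcases le_or_gt (s ^ 2) 1 with h | h
  · rw [min_eq_right h]
    nlinarith [le_max_left 1 (r ^ 2), hs.1, hs.2]
  · rw [min_eq_left h.le]
    have : s ^ 2 ≤ r ^ 2 := by nlinarith [hs.1, hs.2]
    calc s ^ 2 ≤ r ^ 2 := this
      _ ≤ max 1 (r ^ 2) * 1 := by rw [mul_one]; exact le_max_right _ _
  
lemma Ffun_ne_top (hν : Measurable ν) (hH : Hμ d ν ≠ ⊤) (r : ℝ) : Ffun d ν r ≠ ⊤ :=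
  ne_top_of_le_ne_top (ENNReal.mul_ne_top ENNReal.ofReal_ne_top hH) (Ffun_le hν r)

lemma Tfun_le (hν : Measurable ν) {r : ℝ} (hr : 0 < r) :
    Tfun d ν r ≤ ENNReal.ofReal (max 1 (r⁻¹ ^ 2)) * Hμ d ν := by
  rw [Hμ, ← lintegral_const_mul' _ _ ENNReal.ofReal_ne_top]
  refine le_trans (setLIntegral_mono' measurableSet_Ici fun s hs => ?_)
    (setLIntegral_le_lintegral _ _)
  rw [min_one_ofReal, ← mul_assoc,
    ← ENNReal.ofReal_mul (le_trans zero_le_one (le_max_left 1 (r⁻¹ ^ 2)))]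
  have hs' : r ≤ s := hs
  conv_lhs => rw [← one_mul (ν s)]
  refine mul_le_mul_left ?_ _
  rw [← ENNReal.ofReal_one]
  refine ENNReal.ofReal_le_ofReal ?_
  have hinv : r⁻¹ ^ 2 * r ^ 2 = 1 := by field_simp
  rcases le_or_gt 1 (s ^ 2) with h | h
  · rw [min_eq_left h]
    nlinarith [le_max_left 1 (r⁻¹ ^ 2)]
  · rw [min_eq_right h.le]
    have h1 : r ^ 2 ≤ s ^ 2 := by nlinarith
    have h2 : (0:ℝ) ≤ r⁻¹ ^ 2 := by positivity
    calc (1:ℝ) = r⁻¹ ^ 2 * r ^ 2 := hinv.symm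
      _ ≤ r⁻¹ ^ 2 * s ^ 2 := by nlinarith
      _ ≤ max 1 (r⁻¹ ^ 2) * s ^ 2 := by nlinarith [le_max_right 1 (r⁻¹ ^ 2), sq_nonneg s]

lemma Tfun_ne_top (hν : Measurable ν) (hH : Hμ d ν ≠ ⊤) {r : ℝ} (hr : 0 < r) :
    Tfun d ν r ≠ ⊤ :=
  ne_top_of_le_ne_top (ENNReal.mul_ne_top ENNReal.ofReal_ne_top hH) (Tfun_le hν hr)

lemma Gfun_ne_top (hν : Measurable ν) (hH : Hμ d ν ≠ ⊤) {r : ℝ} (hr : 0 < r) :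
    Gfun d ν r ≠ ⊤ := by
  intro h
  apply Ffun_ne_top hν hH r
  rw [Ffun_scale hν hr, h, ENNReal.mul_top (ne_of_gt (ENNReal.ofReal_pos.2 (by positivity)))]

lemma hfun_ne_top (hν : Measurable ν) (hH : Hμ d ν ≠ ⊤) {r : ℝ} (hr : 0 < r) :
    hfun d ν r ≠ ⊤ := by
  rw [hfun_decomp hν hr]
  exact ENNReal.add_ne_top.2
    ⟨ENNReal.mul_ne_top (ENNReal.inv_ne_top.2 (ne_of_gt (ENNReal.ofReal_pos.2 (by positivity))))
      (Ffun_ne_top hν hH r), Tfun_ne_top hν hH hr⟩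

lemma hfun_anti {r₁ r₂ : ℝ} (h1 : 0 < r₁) (h12 : r₁ ≤ r₂) :
    hfun d ν r₂ ≤ hfun d ν r₁ := by
  refine lintegral_mono fun x => ?_
  refine mul_le_mul_left (min_le_min le_rfl (ENNReal.ofReal_le_ofReal ?_)) _
  gcongr

lemma lint_inv_cube {a b : ℝ} (ha : 0 < a) (hab : a ≤ b) :
    ∫⁻ u in Ioo a b, ENNReal.ofReal (2 / u ^ 3) = ENNReal.ofReal (1 / a ^ 2 - 1 / b ^ 2) := by
  have hcont : ContinuousOn (fun u : ℝ => 2 / u ^ 3) (Icc a b) := by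
    apply ContinuousOn.div continuousOn_const (continuousOn_pow 3)
    intro x hx
    exact pow_ne_zero 3 (ne_of_gt (lt_of_lt_of_le ha hx.1))
  have hint : IntegrableOn (fun u : ℝ => 2 / u ^ 3) (Ioo a b) :=
    (hcont.integrableOn_Icc).mono_set Ioo_subset_Icc_self
  rw [← ofReal_integral_eq_lintegral_ofReal hint
    ((ae_restrict_iff' measurableSet_Ioo).2 (ae_of_all _ fun u hu => by
      have : 0 < u := lt_trans ha hu.1
      positivity))]
  congr 1
  have hIoo : ∫ u in Ioo a b, 2 / u ^ 3 = ∫ u in Ioc a b, 2 / u ^ 3 :=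
    MeasureTheory.integral_Ioc_eq_integral_Ioo.symm
  rw [hIoo, ← intervalIntegral.integral_of_le hab]
  have hderiv : ∀ u ∈ uIcc a b, HasDerivAt (fun u : ℝ => -(u ^ 2)⁻¹) (2 / u ^ 3) u := by
    intro u hu
    rw [uIcc_of_le hab] at hu
    have hu0 : (0:ℝ) < u := lt_of_lt_of_le ha hu.1
    have h1 : HasDerivAt (fun u : ℝ => (u ^ 2)⁻¹)
        (-(2 * u ^ 1) / (u ^ 2) ^ 2) u := by
      have := (hasDerivAt_pow 2 u).inv (pow_ne_zero 2 (ne_of_gt hu0))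
      refine this.congr_deriv ?_
      norm_num
    have h2 : -(-(2 * u ^ 1) / (u ^ 2) ^ 2) = 2 / u ^ 3 := by
      field_simp
    exact h2 ▸ h1.neg
  rw [intervalIntegral.integral_eq_sub_of_hasDerivAt hderiv
    ((hcont.mono (by rw [uIcc_of_le hab])).intervalIntegrable)]
  have hb0 : (0:ℝ) < b := lt_of_lt_of_le ha hab
  field_simp
  ring

end
noncomputable def Φfun (d : ℕ) (ν : ℝ → ℝ≥0∞) (a b : ℝ) : ℝ≥0∞ :=
  ∫⁻ s in Ico a b, ENNReal.ofReal (s ^ 2) * ν s ∂(μm d)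

section
variable {d : ℕ} {ν : ℝ → ℝ≥0∞}

lemma meas_cube : Measurable fun u : ℝ => ENNReal.ofReal (2 / u ^ 3) :=
  (measurable_const.div (measurable_id.pow_const 3)).ennreal_ofReal

lemma claimD (hν : Measurable ν) {r R : ℝ} (hr : 0 < r) (hrR : r ≤ R) :
    ∫⁻ s in Ico r R, ν s ∂(μm d)
      = ENNReal.ofReal (1 / R ^ 2) * Φfun d ν r R
        + ∫⁻ u in Ioo r R, ENNReal.ofReal (2 / u ^ 3) * Φfun d ν r u := by
  set g : ℝ → ℝ≥0∞ := fun u => ENNReal.ofReal (2 / u ^ 3) with hg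
  set h : ℝ → ℝ≥0∞ := fun s => ENNReal.ofReal (s ^ 2) * ν s with hh
  have hmeas_h : Measurable h := meas_sqν hν
  -- Step 1: pointwise decomposition on Ico r R
  have hstep1 : ∫⁻ s in Ico r R, ν s ∂(μm d)
      = ∫⁻ s in Ico r R,
          (ENNReal.ofReal (1 / R ^ 2) * h s
            + ∫⁻ u in Ioo r R, (Ioi s).indicator g u * h s) ∂(μm d) := by
    apply setLIntegral_congr_fun measurableSet_Ico
    intro s hs
    dsimp only
    have hs0 : 0 < s := lt_of_lt_of_le hr hs.1
    have hsR : s < R := hs.2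
    have hb : ∫⁻ u in Ioo r R, (Ioi s).indicator g u * h s
        = ENNReal.ofReal (1 / s ^ 2 - 1 / R ^ 2) * h s := by
      rw [lintegral_mul_const _ (meas_cube.indicator measurableSet_Ioi),
        lintegral_indicator measurableSet_Ioi, Measure.restrict_restrict measurableSet_Ioi]
      have hset : Ioi s ∩ Ioo r R = Ioo s R := by
        ext u
        simp only [mem_inter_iff, mem_Ioi, mem_Ioo]
        constructor
        · rintro ⟨h1, _, h3⟩; exact ⟨h1, h3⟩
        · rintro ⟨h1, h2⟩; exact ⟨h1, lt_of_le_of_lt hs.1 h1, h2⟩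
      rw [hset, lint_inv_cube hs0 hsR.le]
    rw [hb, ← add_mul, ← ENNReal.ofReal_add (by positivity)
      (by rw [sub_nonneg]; exact one_div_le_one_div_of_le (by positivity) (by nlinarith))]
    have : 1 / R ^ 2 + (1 / s ^ 2 - 1 / R ^ 2) = 1 / s ^ 2 := by ring
    rw [this, hh, ← mul_assoc, ← ENNReal.ofReal_mul (by positivity)]
    have h1 : 1 / s ^ 2 * s ^ 2 = 1 := by field_simp
    rw [h1, ENNReal.ofReal_one, one_mul]
  rw [hstep1, lintegral_add_left (hmeas_h.const_mul _),
    lintegral_const_mul' _ _ ENNReal.ofReal_ne_top]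
  congr 1
  -- Step 2: swap
  have hswap : ∫⁻ s in Ico r R, (∫⁻ u in Ioo r R, (Ioi s).indicator g u * h s) ∂(μm d)
      = ∫⁻ u in Ioo r R, (∫⁻ s in Ico r R, (Ioi s).indicator g u * h s ∂(μm d)) := by
    apply lintegral_lintegral_swap
    have heq : (Function.uncurry fun s u => (Ioi s).indicator g u * h s)
        = Set.indicator {q : ℝ × ℝ | q.1 < q.2} (fun q => g q.2 * h q.1) := by
      funext p
      rcases lt_or_ge p.1 p.2 with hp | hp
      · rw [Set.indicator_of_mem (by exact hp), Function.uncurry]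
        rw [Set.indicator_of_mem (by exact hp : p.2 ∈ Ioi p.1)]
      · rw [Set.indicator_of_notMem (by exact not_lt.2 hp), Function.uncurry]
        rw [Set.indicator_of_notMem (by exact not_lt.2 hp : p.2 ∉ Ioi p.1), zero_mul]
    rw [heq]
    exact (((meas_cube.comp measurable_snd).mul
      (hmeas_h.comp measurable_fst)).indicator
        (measurableSet_lt measurable_fst measurable_snd)).aemeasurable
  rw [hswap]
  apply setLIntegral_congr_fun measurableSet_Ioo
  intro u hu
  dsimp only
  have hinteq : (fun s => (Ioi s).indicator g u * h s)
      = fun s => (Iio u).indicator (fun s' => ENNReal.ofReal (2 / u ^ 3) * h s') s := by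
    funext s
    rcases lt_or_ge s u with hsu | hsu
    · rw [Set.indicator_of_mem (by exact hsu : u ∈ Ioi s),
        Set.indicator_of_mem (by exact hsu : s ∈ Iio u)]
    · rw [Set.indicator_of_notMem (by exact not_lt.2 hsu : u ∉ Ioi s),
        Set.indicator_of_notMem (by exact not_lt.2 hsu : s ∉ Iio u), zero_mul]
  rw [hinteq, lintegral_indicator measurableSet_Iio,
    Measure.restrict_restrict measurableSet_Iio]
  have hset2 : Iio u ∩ Ico r R = Ico r u := by
    ext s
    simp only [mem_inter_iff, mem_Iio, mem_Ico]
    constructor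
    · rintro ⟨h1, h2, _⟩; exact ⟨h2, h1⟩
    · rintro ⟨h1, h2⟩; exact ⟨h2, h1, lt_trans h2 hu.2⟩
  rw [hset2, lintegral_const_mul' _ _ ENNReal.ofReal_ne_top]
  rfl

end
section
variable {d : ℕ} {ν : ℝ → ℝ≥0∞}

lemma measurable_νM (hν : Measurable ν) : Measurable fun s : ℝ => ν (max s 0) :=
  hν.comp (measurable_id.max measurable_const)

lemma antitone_νM (hν_mono : AntitoneOn ν (Ici 0)) :
    Antitone fun s : ℝ => ν (max s 0) := by
  intro a b hab
  exact hν_mono (mem_Ici.2 (le_max_right a 0)) (mem_Ici.2 (le_max_right b 0))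
    (max_le_max hab le_rfl)

lemma Gfun_eq_νM {r : ℝ} (hr : 0 < r) :
    Gfun d ν r = ∫⁻ u in Ioo 0 1, ENNReal.ofReal (u ^ 2) * ν (max (r * u) 0) ∂(μm d) := by
  apply setLIntegral_congr_fun measurableSet_Ioo
  intro u hu
  dsimp only
  rw [max_eq_left (by nlinarith [hu.1] : (0:ℝ) ≤ r * u)]

lemma noAtoms_μm (hd : 0 < d) : ∀ x : ℝ, μm d {x} = 0 := by
  intro x
  haveI : Nontrivial (EuclideanSpace ℝ (Fin d)) := by
    apply Module.nontrivial_of_finrank_pos (R := ℝ)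
    rw [finrank_euclideanSpace_fin]
    exact hd
  rw [μm_apply d (measurableSet_singleton x)]
  have : {y : EuclideanSpace ℝ (Fin d) | ‖y‖ ∈ ({x} : Set ℝ)} = Metric.sphere 0 x := by
    ext y; simp [Metric.mem_sphere, dist_zero_right]
  rw [this]
  exact Measure.addHaar_sphere volume 0 x

lemma countable_null_μm (hd : 0 < d) {s : Set ℝ} (hs : s.Countable) : μm d s = 0 := by
  haveI : MeasureTheory.NullSingletonClass (μm d) := ⟨noAtoms_μm hd⟩
  exact hs.measure_zero _

lemma Gfun_continuousOn (hν : Measurable ν) (hν_mono : AntitoneOn ν (Ici 0))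
    (hH : Hμ d ν ≠ ⊤) (hd : 0 < d) {a b : ℝ} (ha : 0 < a) :
    ContinuousOn (fun r => Gfun d ν r) (Icc a b) := by
  set νM : ℝ → ℝ≥0∞ := fun s => ν (max s 0) with hνM
  intro r₀ hr₀
  have hr₀pos : 0 < r₀ := lt_of_lt_of_le ha hr₀.1
  unfold ContinuousWithinAt
  show Tendsto (fun r => Gfun d ν r) (𝓝[Icc a b] r₀) (𝓝 (Gfun d ν r₀))
  have hconv : ∀ r ∈ Icc a b, Gfun d ν r
      = ∫⁻ u in Ioo 0 1, ENNReal.ofReal (u ^ 2) * νM (r * u) ∂(μm d) := fun r hr =>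
    Gfun_eq_νM (lt_of_lt_of_le ha hr.1)
  rw [hconv r₀ hr₀]
  have htt : Tendsto (fun r => ∫⁻ u in Ioo 0 1, ENNReal.ofReal (u ^ 2) * νM (r * u) ∂(μm d))
      (𝓝[Icc a b] r₀)
      (𝓝 (∫⁻ u in Ioo 0 1, ENNReal.ofReal (u ^ 2) * νM (r₀ * u) ∂(μm d))) := by
    apply tendsto_lintegral_filter_of_dominated_convergence
      (fun u => ENNReal.ofReal (u ^ 2) * νM (a * u))
    · exact Eventually.of_forall fun r =>
        meas_sq.mul ((measurable_νM hν).comp (measurable_const_mul r))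
    · filter_upwards [eventually_mem_nhdsWithin] with r hr
      rw [ae_restrict_iff' measurableSet_Ioo]
      apply ae_of_all
      intro u hu
      refine mul_le_mul_right (antitone_νM hν_mono ?_) _
      nlinarith [hu.1, hr.1]
    · rw [← hconv a ⟨le_rfl, le_trans hr₀.1 hr₀.2⟩]
      exact Gfun_ne_top hν hH ha
    · have hcnt : Set.Countable {x : ℝ | ¬ContinuousAt νM x} :=
        (antitone_νM hν_mono).countable_not_continuousAt
      have hnull : μm d ((fun u : ℝ => r₀ * u) ⁻¹' {x : ℝ | ¬ContinuousAt νM x}) = 0 := by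
        apply countable_null_μm hd
        apply Set.Countable.preimage hcnt
        exact mul_right_injective₀ (ne_of_gt hr₀pos)
      have hnull' : (μm d).restrict (Ioo 0 1)
          ((fun u : ℝ => r₀ * u) ⁻¹' {x : ℝ | ¬ContinuousAt νM x}) = 0 :=
        le_antisymm (le_trans (Measure.restrict_le_self _) hnull.le) zero_le
      have hae : ∀ᵐ u ∂(μm d).restrict (Ioo 0 1), ContinuousAt νM (r₀ * u) := by
        rw [ae_iff]; exact hnull'
      filter_upwards [hae] with u hu
      have h1 : Tendsto (fun r : ℝ => r * u) (𝓝[Icc a b] r₀) (𝓝 (r₀ * u)) :=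
        ((continuous_mul_right u).continuousAt).mono_left nhdsWithin_le_nhds
      exact ENNReal.Tendsto.const_mul (hu.tendsto.comp h1) (Or.inr ENNReal.ofReal_ne_top)
  refine Tendsto.congr' ?_ htt
  filter_upwards [eventually_mem_nhdsWithin] with r hr
  exact (hconv r hr).symm

end
section
variable {d : ℕ} {ν : ℝ → ℝ≥0∞}

lemma μm_Iio_ne_top (r : ℝ) : μm d (Iio r) ≠ ⊤ := by
  rw [μm_apply d measurableSet_Iio]
  refine ne_of_lt (lt_of_le_of_lt (measure_mono ?_) (measure_closedBall_lt_top
    (x := (0 : EuclideanSpace ℝ (Fin d))) (r := r)))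
  intro x hx
  simp only [mem_setOf_eq, mem_Iio] at hx
  simp [Metric.mem_closedBall, dist_zero_right, hx.le]

lemma μm_scale_null {c : ℝ} (hc : 0 < c) {S : Set ℝ} (hS : μm d S = 0) :
    μm d ((fun u : ℝ => c * u) ⁻¹' S) = 0 := by
  obtain ⟨S', hSS', hS'meas, hS'0⟩ := exists_measurable_superset_of_null hS
  have key := μm_scale d hc (f := S'.indicator fun _ => (1 : ℝ≥0∞))
    ((measurable_const).indicator hS'meas)
  rw [lintegral_indicator hS'meas, setLIntegral_one, hS'0] at key
  have hind : ∀ u : ℝ, S'.indicator (fun _ => (1:ℝ≥0∞)) (c * u)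
      = ((fun u : ℝ => c * u) ⁻¹' S').indicator (fun _ => (1:ℝ≥0∞)) u := by
    intro u
    by_cases h : c * u ∈ S'
    · rw [indicator_of_mem h, indicator_of_mem (by exact h)]
    · rw [indicator_of_notMem h, indicator_of_notMem (by exact h)]
  simp only [hind] at key
  rw [lintegral_indicator (hS'meas.preimage (measurable_const_mul c)), setLIntegral_one] at key
  have h0 : μm d ((fun u : ℝ => c * u) ⁻¹' S') = 0 := by
    by_contra h
    rw [eq_comm, mul_eq_zero] at key
    rcases key with h' | h'
    · exact absurd h' (ne_of_gt (ENNReal.ofReal_pos.2 (by positivity)))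
    · exact h h'
  exact measure_mono_null (preimage_mono hSS') h0

lemma rigid (hν : Measurable ν) (hν_mono : AntitoneOn ν (Ici 0)) (hH : Hμ d ν ≠ ⊤)
    (hd : 0 < d) {r₁ r₂ : ℝ} (h1 : 0 < r₁) (h12 : r₁ < r₂)
    (hG : Gfun d ν r₁ = Gfun d ν r₂) :
    ∃ M : ℝ≥0∞, M ≠ ⊤ ∧ ∀ r : ℝ, 0 < r → hfun d ν r ≤ M := by
  have h2 : 0 < r₂ := lt_trans h1 h12
  set μ' := (μm d).restrict (Ioo (0:ℝ) 1) with hμ'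
  set f₁ : ℝ → ℝ≥0∞ := fun u => ENNReal.ofReal (u ^ 2) * ν (r₁ * u) with hf₁
  set f₂ : ℝ → ℝ≥0∞ := fun u => ENNReal.ofReal (u ^ 2) * ν (r₂ * u) with hf₂
  have hmf₁ : Measurable f₁ := meas_sq.mul (hν.comp (measurable_const_mul r₁))
  have hmf₂ : Measurable f₂ := meas_sq.mul (hν.comp (measurable_const_mul r₂))
  have hle : f₂ ≤ᵐ[μ'] f₁ := by
    rw [hμ', EventuallyLE, ae_restrict_iff' measurableSet_Ioo]
    apply ae_of_all
    intro u hu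
    exact mul_le_mul_right (hν_mono (mem_Ici.2 (by nlinarith [hu.1]))
      (mem_Ici.2 (by nlinarith [hu.1])) (by nlinarith [hu.1])) _
  have hfin : ∫⁻ u, f₂ u ∂μ' ≠ ⊤ := Gfun_ne_top hν hH h2
  have hsub : ∫⁻ u, (f₁ u - f₂ u) ∂μ' = 0 := by
    rw [lintegral_sub hmf₂ hfin hle]
    rw [show ∫⁻ u, f₁ u ∂μ' = Gfun d ν r₁ from rfl, show ∫⁻ u, f₂ u ∂μ' = Gfun d ν r₂ from rfl,
      hG, tsub_self]
  have hae0 : ∀ᵐ u ∂μ', f₁ u - f₂ u = 0 :=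
    (lintegral_eq_zero_iff (hmf₁.sub hmf₂)).1 hsub
  have haeq : ∀ᵐ u ∂μ', u ∈ Ioo (0:ℝ) 1 → ν (r₁ * u) = ν (r₂ * u) := by
    filter_upwards [hae0, hle] with u h0 hle' hu
    have heq : f₁ u = f₂ u := le_antisymm (tsub_eq_zero_iff_le.1 h0) hle'
    have hu2 : ENNReal.ofReal (u ^ 2) ≠ 0 := ne_of_gt (ENNReal.ofReal_pos.2 (by nlinarith [hu.1]))
    have := congrArg (fun z => (ENNReal.ofReal (u ^ 2))⁻¹ * z) heq
    simpa [hf₁, hf₂, ← mul_assoc, ENNReal.inv_mul_cancel hu2 ENNReal.ofReal_ne_top, one_mul]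
      using this
  -- convert to a null set of μm d
  set N : Set ℝ := {u | ¬ (u ∈ Ioo (0:ℝ) 1 → ν (r₁ * u) = ν (r₂ * u))} with hN
  have hNnull : μm d N = 0 := by
    have := ae_iff.1 haeq
    rw [hμ', Measure.restrict_apply₀'] at this
    · refine measure_mono_null ?_ this
      intro u hu
      refine ⟨hu, ?_⟩
      rw [hN] at hu
      simp only [mem_setOf_eq, Classical.not_imp] at hu
      exact hu.1
    · exact measurableSet_Ioo.nullMeasurableSet
  set q : ℝ := r₁ / r₂ with hq
  have hq0 : 0 < q := div_pos h1 h2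
  have hq1 : q < 1 := (div_lt_one h2).2 h12
  have hSnull : ∀ n : ℕ, μm d ((fun u : ℝ => q ^ n * u) ⁻¹' N) = 0 := fun n =>
    μm_scale_null (pow_pos hq0 n) hNnull
  have hBnull : μm d (⋃ n : ℕ, (fun u : ℝ => q ^ n * u) ⁻¹' N) = 0 :=
    measure_iUnion_null hSnull
  -- pick a good point
  have hpos : 0 < μm d (Ioo (1/2 : ℝ) 1) := μm_Ioo_pos d hd (by norm_num) (by norm_num)
  have hex : ∃ u : ℝ, u ∈ Ioo (1/2 : ℝ) 1 ∧ u ∉ ⋃ n : ℕ, (fun u : ℝ => q ^ n * u) ⁻¹' N := by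
    by_contra hc
    push_neg at hc
    have : Ioo (1/2 : ℝ) 1 ⊆ ⋃ n : ℕ, (fun u : ℝ => q ^ n * u) ⁻¹' N := fun u hu => hc u hu
    exact absurd (measure_mono_null this hBnull) (ne_of_gt hpos)
  obtain ⟨u₀, hu₀, hu₀B⟩ := hex
  have hu₀pos : 0 < u₀ := lt_trans (by norm_num) hu₀.1
  have hgood : ∀ n : ℕ, ν (q ^ (n+1) * (r₂ * u₀)) = ν (q ^ n * (r₂ * u₀)) := by
    intro n
    have hn : u₀ ∉ (fun u : ℝ => q ^ n * u) ⁻¹' N := fun h => hu₀B (mem_iUnion.2 ⟨n, h⟩)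
    rw [mem_preimage, hN, mem_setOf_eq, not_not] at hn
    have hmem : q ^ n * u₀ ∈ Ioo (0:ℝ) 1 := by
      constructor
      · positivity
      · have : q ^ n ≤ 1 := pow_le_one₀ hq0.le hq1.le
        nlinarith [hu₀.2, pow_pos hq0 n]
    have := hn hmem
    have harg1 : r₁ * (q ^ n * u₀) = q ^ (n+1) * (r₂ * u₀) := by
      rw [hq, pow_succ]; field_simp
    have harg2 : r₂ * (q ^ n * u₀) = q ^ n * (r₂ * u₀) := by ring
    rw [harg1, harg2] at this
    exact this
  set s₀ : ℝ := r₂ * u₀ with hs₀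
  have hs₀pos : 0 < s₀ := by positivity
  have hconst : ∀ n : ℕ, ν (q ^ n * s₀) = ν s₀ := by
    intro n
    induction n with
    | zero => rw [pow_zero, one_mul]
    | succ k ih => rw [hgood k, ih]
  have hflat : ∀ v : ℝ, 0 < v → v ≤ s₀ → ν v = ν s₀ := by
    intro v hv hvs
    obtain ⟨n, hn⟩ := exists_pow_lt_of_lt_one (div_pos hv hs₀pos) hq1
    have hlt : q ^ n * s₀ < v := by
      rw [lt_div_iff₀ hs₀pos] at hn
      exact hn
    have hxn : 0 < q ^ n * s₀ := by positivity
    refine le_antisymm ?_ ?_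
    · have := hν_mono (mem_Ici.2 hxn.le) (mem_Ici.2 hv.le) hlt.le
      rw [hconst n] at this
      exact this
    · exact hν_mono (mem_Ici.2 hv.le) (mem_Ici.2 hs₀pos.le) hvs
  -- ν s₀ is finite
  have hc0 : ν s₀ ≠ ⊤ := by
    intro hc
    apply Ffun_ne_top hν hH s₀
    rw [Ffun]
    rw [eq_top_iff]
    calc (⊤ : ℝ≥0∞) = ENNReal.ofReal ((s₀/2) ^ 2) * ⊤ * μm d (Ioo (s₀/2) s₀) := by
          rw [ENNReal.mul_top (ne_of_gt (ENNReal.ofReal_pos.2 (by positivity))),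
            ENNReal.top_mul (ne_of_gt (μm_Ioo_pos d hd (by positivity) (by linarith)))]
      _ = ∫⁻ _ in Ioo (s₀/2) s₀, ENNReal.ofReal ((s₀/2) ^ 2) * ⊤ ∂(μm d) :=
          (setLIntegral_const _ _).symm
      _ ≤ ∫⁻ s in Ioo (s₀/2) s₀, ENNReal.ofReal (s ^ 2) * ν s ∂(μm d) := by
          apply setLIntegral_mono' measurableSet_Ioo
          intro s hs
          have : ν s = ν s₀ := hflat s (by linarith [hs.1, hs₀pos]) hs.2.le
          rw [this, hc]
          exact mul_le_mul' (ENNReal.ofReal_le_ofReal (by nlinarith [hs.1, hs.2, hs₀pos])) le_rfl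
      _ ≤ ∫⁻ s in Ioo 0 s₀, ENNReal.ofReal (s ^ 2) * ν s ∂(μm d) :=
          lintegral_mono' (Measure.restrict_mono (by
            intro s hs
            rw [mem_Ioo] at hs ⊢
            exact ⟨by linarith [hs.1], hs.2⟩) le_rfl) le_rfl
  -- the uniform bound
  refine ⟨ν s₀ * μm d (Iio s₀) + Tfun d ν s₀, ?_, ?_⟩
  · exact ENNReal.add_ne_top.2 ⟨ENNReal.mul_ne_top hc0 (μm_Iio_ne_top s₀),
      Tfun_ne_top hν hH hs₀pos⟩
  · intro r hr
    rw [hfun_μm hν r, ← lintegral_add_compl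
      (fun s => min 1 (ENNReal.ofReal (s ^ 2 / r ^ 2)) * ν s) (measurableSet_Iio (a := s₀)),
      compl_Iio]
    refine add_le_add ?_ ?_
    · calc ∫⁻ s in Iio s₀, min 1 (ENNReal.ofReal (s ^ 2 / r ^ 2)) * ν s ∂(μm d)
          ≤ ∫⁻ _ in Iio s₀, ν s₀ ∂(μm d) := by
            refine setLIntegral_mono_ae aemeasurable_const ?_
            filter_upwards [μm_ae_nonneg d] with s hs0 hs
            rcases eq_or_lt_of_le hs0 with h | h
            · rw [← h]
              simp
            · calc min 1 (ENNReal.ofReal (s ^ 2 / r ^ 2)) * ν s ≤ 1 * ν s :=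
                  mul_le_mul' (min_le_left _ _) le_rfl
                _ = ν s₀ := by rw [one_mul, hflat s h (le_of_lt hs)]
        _ = ν s₀ * μm d (Iio s₀) := setLIntegral_const _ _
    · refine le_trans (setLIntegral_mono' measurableSet_Ici fun s _ => ?_) le_rfl
      calc min 1 (ENNReal.ofReal (s ^ 2 / r ^ 2)) * ν s ≤ 1 * ν s :=
            mul_le_mul' (min_le_left _ _) le_rfl
        _ = ν s := one_mul _

end
section
variable {d : ℕ} {ν : ℝ → ℝ≥0∞}

lemma FΦ_union (hν : Measurable ν) {a b : ℝ} (ha : 0 < a) (hab : a ≤ b) :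
    Ffun d ν a + Φfun d ν a b = Ffun d ν b := by
  have hset : Ioo 0 a ∪ Ico a b = Ioo 0 b := by
    ext s
    simp only [mem_union, mem_Ioo, mem_Ico]
    constructor
    · rintro (⟨h1, h2⟩ | ⟨h1, h2⟩)
      · exact ⟨h1, lt_of_lt_of_le h2 hab⟩
      · exact ⟨lt_of_lt_of_le ha h1, h2⟩
    · rintro ⟨h1, h2⟩
      rcases lt_or_ge s a with h | h
      · exact Or.inl ⟨h1, h⟩
      · exact Or.inr ⟨h, h2⟩
  rw [Ffun, Φfun, Ffun, ← lintegral_union measurableSet_Ico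
    (by apply Set.disjoint_left.2; rintro s ⟨_, h2⟩ ⟨h3, _⟩; exact absurd h3 (not_le.2 h2)), hset]

lemma Tfun_split (hν : Measurable ν) {a b : ℝ} (hab : a ≤ b) :
    Tfun d ν a = (∫⁻ s in Ico a b, ν s ∂(μm d)) + Tfun d ν b := by
  have hset : Ico a b ∪ Ici b = Ici a := by
    ext s
    simp only [mem_union, mem_Ico, mem_Ici]
    constructor
    · rintro (⟨h1, _⟩ | h1); exacts [h1, le_trans hab h1]
    · intro h1
      rcases lt_or_ge s b with h | h
      · exact Or.inl ⟨h1, h⟩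
      · exact Or.inr h
  rw [Tfun, Tfun, ← lintegral_union measurableSet_Ici
    (by apply Set.disjoint_left.2; rintro s ⟨_, h2⟩ h3; exact absurd (mem_Ici.1 h3) (not_le.2 h2)),
    hset]

lemma endpoint (hν : Measurable ν) (hν_mono : AntitoneOn ν (Ici 0)) (hH : Hμ d ν ≠ ⊤)
    (hd : 0 < d) {t ρ₃ ρ₁ : ℝ} (ht : 0 < t) (h3 : 0 < ρ₃) (h31 : ρ₃ < ρ₁)
    (hh3 : hfun d ν ρ₃ = ENNReal.ofReal (3 / t))
    (hh1 : hfun d ν ρ₁ = ENNReal.ofReal (1 / t)) :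
    ENNReal.ofReal ((ρ₁ ^ d)⁻¹) ≤ ENNReal.ofReal t * Gfun d ν ρ₃ := by
  have h1 : 0 < ρ₁ := lt_trans h3 h31
  -- the main chain
  have hchain : hfun d ν ρ₃ ≤ hfun d ν ρ₁ + ENNReal.ofReal (2 * ρ₁ ^ d) * Gfun d ν ρ₃ := by
    rw [hfun_decomp hν h3, hfun_decomp hν h1]
    have hTsplit := Tfun_split (d := d) hν h31.le
    have hM := claimD (d := d) hν h3 h31.le
    -- split (ρ₃²)⁻¹ F ρ₃
    have hFsplit : (ENNReal.ofReal (ρ₃ ^ 2))⁻¹ * Ffun d ν ρ₃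
        = ENNReal.ofReal (1 / ρ₁ ^ 2) * Ffun d ν ρ₃
          + ∫⁻ u in Ioo ρ₃ ρ₁, ENNReal.ofReal (2 / u ^ 3) * Ffun d ν ρ₃ := by
      rw [lintegral_mul_const' _ _ (Ffun_ne_top hν hH ρ₃), lint_inv_cube h3 h31.le,
        ← ENNReal.ofReal_inv_of_pos (by positivity), ← add_mul,
        ← ENNReal.ofReal_add (by positivity) (by
          rw [sub_nonneg]
          exact one_div_le_one_div_of_le (by positivity) (by nlinarith))]
      congr 2
      rw [one_div]
      ring
    calc (ENNReal.ofReal (ρ₃ ^ 2))⁻¹ * Ffun d ν ρ₃ + Tfun d ν ρ₃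
        = ENNReal.ofReal (1 / ρ₁ ^ 2) * (Ffun d ν ρ₃ + Φfun d ν ρ₃ ρ₁)
          + (∫⁻ u in Ioo ρ₃ ρ₁,
              (ENNReal.ofReal (2 / u ^ 3) * Ffun d ν ρ₃
                + ENNReal.ofReal (2 / u ^ 3) * Φfun d ν ρ₃ u))
          + Tfun d ν ρ₁ := by
          rw [hTsplit, hM, hFsplit, mul_add,
            lintegral_add_left (meas_cube.mul_const _)]
          ring
      _ = ENNReal.ofReal (1 / ρ₁ ^ 2) * Ffun d ν ρ₁
          + (∫⁻ u in Ioo ρ₃ ρ₁, ENNReal.ofReal (2 / u ^ 3) * Ffun d ν u)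
          + Tfun d ν ρ₁ := by
          rw [FΦ_union hν h3 h31.le]
          congr 2
          apply setLIntegral_congr_fun measurableSet_Ioo
          intro u hu
          dsimp only
          rw [← mul_add, FΦ_union hν h3 hu.1.le]
      _ ≤ (ENNReal.ofReal (ρ₁ ^ 2))⁻¹ * Ffun d ν ρ₁ + Tfun d ν ρ₁
          + ENNReal.ofReal (2 * ρ₁ ^ d) * Gfun d ν ρ₃ := by
          rw [← ENNReal.ofReal_inv_of_pos (by positivity : (0:ℝ) < ρ₁ ^ 2), ← one_div]
          have hbound : ∫⁻ u in Ioo ρ₃ ρ₁, ENNReal.ofReal (2 / u ^ 3) * Ffun d ν u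
              ≤ ENNReal.ofReal (2 * ρ₁ ^ d) * Gfun d ν ρ₃ := by
            have hstep : ∫⁻ u in Ioo ρ₃ ρ₁, ENNReal.ofReal (2 / u ^ 3) * Ffun d ν u
                ≤ ∫⁻ _ in Ioo ρ₃ ρ₁,
                    ENNReal.ofReal (2 * ρ₁ ^ (d - 1)) * Gfun d ν ρ₃ := by
              apply setLIntegral_mono' measurableSet_Ioo
              intro u hu
              have hu0 : 0 < u := lt_trans h3 hu.1
              rw [Ffun_scale hν hu0, ← mul_assoc, ← ENNReal.ofReal_mul (by positivity)]
              have harith : 2 / u ^ 3 * u ^ (d + 2) = 2 * u ^ (d - 1) := by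
                have hd2 : d + 2 = (d - 1) + 3 := by omega
                rw [hd2, pow_add]
                field_simp
              rw [harith]
              refine mul_le_mul' (ENNReal.ofReal_le_ofReal ?_)
                (Gfun_antitone hν_mono h3 hu.1.le)
              have : u ^ (d - 1) ≤ ρ₁ ^ (d - 1) := by
                apply pow_le_pow_left₀ hu0.le (le_of_lt hu.2)
              linarith
            refine le_trans hstep ?_
            rw [setLIntegral_const, Real.volume_Ioo]
            have hpow : ρ₁ ^ (d - 1) * ρ₁ = ρ₁ ^ d := by
              rw [← pow_succ]
              congr 1
              omega
            calc ENNReal.ofReal (2 * ρ₁ ^ (d - 1)) * Gfun d ν ρ₃ * ENNReal.ofReal (ρ₁ - ρ₃)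
                = ENNReal.ofReal (2 * ρ₁ ^ (d - 1)) * ENNReal.ofReal (ρ₁ - ρ₃) * Gfun d ν ρ₃ := by
                  ring
              _ ≤ ENNReal.ofReal (2 * ρ₁ ^ d) * Gfun d ν ρ₃ := by
                  refine mul_le_mul' ?_ le_rfl
                  rw [← ENNReal.ofReal_mul (by positivity)]
                  refine ENNReal.ofReal_le_ofReal ?_
                  nlinarith [pow_pos h1 (d-1), pow_pos h1 d]
          calc ENNReal.ofReal (1 / ρ₁ ^ 2) * Ffun d ν ρ₁
              + (∫⁻ u in Ioo ρ₃ ρ₁, ENNReal.ofReal (2 / u ^ 3) * Ffun d ν u)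
              + Tfun d ν ρ₁
              ≤ ENNReal.ofReal (1 / ρ₁ ^ 2) * Ffun d ν ρ₁
                + ENNReal.ofReal (2 * ρ₁ ^ d) * Gfun d ν ρ₃ + Tfun d ν ρ₁ := by
                exact add_le_add (add_le_add le_rfl hbound) le_rfl
            _ = ENNReal.ofReal (1 / ρ₁ ^ 2) * Ffun d ν ρ₁ + Tfun d ν ρ₁
                + ENNReal.ofReal (2 * ρ₁ ^ d) * Gfun d ν ρ₃ := by ring
  -- conclude
  have hnum : ENNReal.ofReal (3:ℝ) ≤ ENNReal.ofReal (1:ℝ)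
      + ENNReal.ofReal t * (ENNReal.ofReal (2 * ρ₁ ^ d) * Gfun d ν ρ₃) := by
    calc ENNReal.ofReal (3:ℝ) = ENNReal.ofReal t * hfun d ν ρ₃ := by
          rw [hh3, ← ENNReal.ofReal_mul ht.le]
          congr 1
          field_simp
      _ ≤ ENNReal.ofReal t * (hfun d ν ρ₁ + ENNReal.ofReal (2 * ρ₁ ^ d) * Gfun d ν ρ₃) :=
          mul_le_mul_right hchain _
      _ = ENNReal.ofReal (1:ℝ)
          + ENNReal.ofReal t * (ENNReal.ofReal (2 * ρ₁ ^ d) * Gfun d ν ρ₃) := by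
          rw [mul_add, hh1, ← ENNReal.ofReal_mul ht.le]
          congr 2
          field_simp
  have h2le : ENNReal.ofReal (2:ℝ)
      ≤ ENNReal.ofReal t * Gfun d ν ρ₃ * ENNReal.ofReal (2 * ρ₁ ^ d) := by
    have h31' : ENNReal.ofReal (3:ℝ) = ENNReal.ofReal (1:ℝ) + ENNReal.ofReal (2:ℝ) := by
      rw [← ENNReal.ofReal_add] <;> norm_num
    rw [h31'] at hnum
    have := (ENNReal.add_le_add_iff_left ENNReal.ofReal_ne_top).1 hnum
    calc ENNReal.ofReal (2:ℝ)
        ≤ ENNReal.ofReal t * (ENNReal.ofReal (2 * ρ₁ ^ d) * Gfun d ν ρ₃) := this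
      _ = ENNReal.ofReal t * Gfun d ν ρ₃ * ENNReal.ofReal (2 * ρ₁ ^ d) := by ring
  have hfinal := (ENNReal.div_le_iff_le_mul
    (Or.inl (ne_of_gt (ENNReal.ofReal_pos.2 (by positivity : (0:ℝ) < 2 * ρ₁ ^ d))))
    (Or.inl ENNReal.ofReal_ne_top)).2 h2le
  refine le_trans (le_of_eq ?_) hfinal
  rw [← ENNReal.ofReal_div_of_pos (by positivity : (0:ℝ) < 2 * ρ₁ ^ d)]
  congr 1
  rw [eq_div_iff (by positivity : (2 * ρ₁ ^ d) ≠ 0)]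
  field_simp

end

lemma ennreal_mul_div_cancel_left {a b : ℝ≥0∞} (h0 : a ≠ 0) (hI : a ≠ ⊤) :
    a * b / a = b := by
  rw [div_eq_mul_inv, mul_comm a b, mul_assoc, ENNReal.mul_inv_cancel h0 hI, mul_one]

end Stmt10Aux

open Stmt10Aux in
theorem stmt10 (d : ℕ) (hd : 0 < d) (ν : ℝ → ℝ≥0∞)
    (hν_meas : Measurable ν) (hν_mono : AntitoneOn ν (Set.Ici 0))
    (hν_int : (∫⁻ x : EuclideanSpace ℝ (Fin d),
      min 1 (ENNReal.ofReal (‖x‖ ^ 2)) * ν ‖x‖) ≠ ⊤)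
    (hinv : ℝ → ℝ) (hinv_pos : ∀ u : ℝ, 0 < u → 0 < hinv u)
    (hinv_eq : ∀ u : ℝ, 0 < u → hfun d ν (hinv u) = ENNReal.ofReal u)
 :
    ∀ t : ℝ, 0 < t →
      ∃ r0 : ℝ, (0 < r0 ∧
        ENNReal.ofReal t * Kfun d ν r0 / ENNReal.ofReal (r0 ^ d)
          = ENNReal.ofReal (((hinv (1 / t)) ^ d)⁻¹) ∧
        r0 ∈ Set.Icc (hinv (3 / t)) (hinv (1 / t))) ∧
      ∀ r : ℝ, 0 < r →
        ENNReal.ofReal t * Kfun d ν r / ENNReal.ofReal (r ^ d)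
          = ENNReal.ofReal (((hinv (1 / t)) ^ d)⁻¹) → r = r0 := by
  intro t ht
  have h1t : (0:ℝ) < 1 / t := by positivity
  have h3t : (0:ℝ) < 3 / t := by positivity
  set ρ₁ := hinv (1 / t) with hρ₁
  set ρ₃ := hinv (3 / t) with hρ₃
  have hρ₁pos : 0 < ρ₁ := hinv_pos _ h1t
  have hρ₃pos : 0 < ρ₃ := hinv_pos _ h3t
  have hh1 : hfun d ν ρ₁ = ENNReal.ofReal (1 / t) := hinv_eq _ h1t
  have hh3 : hfun d ν ρ₃ = ENNReal.ofReal (3 / t) := hinv_eq _ h3t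
  have hH : Hμ d ν ≠ ⊤ := by rw [Hμ_eq hν_meas]; exact hν_int
  have h31 : ρ₃ < ρ₁ := by
    by_contra hc
    push_neg at hc
    have hmono := hfun_anti (ν := ν) (d := d) hρ₁pos hc
    rw [hh1, hh3] at hmono
    have h13 : 3 / t ≤ 1 / t := by
      rwa [ENNReal.ofReal_le_ofReal_iff (by positivity)] at hmono
    have e3 : (3:ℝ) / t * t = 3 := by field_simp
    have e1 : (1:ℝ) / t * t = 1 := by field_simp
    nlinarith
  have hident : ∀ r : ℝ, 0 < r →
      ENNReal.ofReal t * Kfun d ν r / ENNReal.ofReal (r ^ d)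
        = ENNReal.ofReal t * Gfun d ν r := by
    intro r hr
    have hK : Kfun d ν r = ENNReal.ofReal (r ^ d) * Gfun d ν r := by
      rw [Kfun_decomp hν_meas hr, Ffun_scale hν_meas hr]
      have hp : (r : ℝ) ^ (d + 2) = r ^ 2 * r ^ d := by rw [pow_add]; ring
      rw [hp, ENNReal.ofReal_mul (by positivity), ← mul_assoc, ← mul_assoc,
        ENNReal.inv_mul_cancel (ne_of_gt (ENNReal.ofReal_pos.2 (by positivity)))
          ENNReal.ofReal_ne_top, one_mul]
    rw [hK, show ENNReal.ofReal t * (ENNReal.ofReal (r ^ d) * Gfun d ν r)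
        = ENNReal.ofReal (r ^ d) * (ENNReal.ofReal t * Gfun d ν r) by ring,
      ennreal_mul_div_cancel_left (ne_of_gt (ENNReal.ofReal_pos.2 (by positivity)))
        ENNReal.ofReal_ne_top]
  have hup : ENNReal.ofReal t * Gfun d ν ρ₁ ≤ ENNReal.ofReal ((ρ₁ ^ d)⁻¹) := by
    have hKh : Kfun d ν ρ₁ ≤ hfun d ν ρ₁ := by
      rw [Kfun_decomp hν_meas hρ₁pos, hfun_decomp hν_meas hρ₁pos]
      exact self_le_add_right _ _
    calc ENNReal.ofReal t * Gfun d ν ρ₁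
        = ENNReal.ofReal t * Kfun d ν ρ₁ / ENNReal.ofReal (ρ₁ ^ d) :=
          (hident ρ₁ hρ₁pos).symm
      _ ≤ ENNReal.ofReal t * hfun d ν ρ₁ / ENNReal.ofReal (ρ₁ ^ d) :=
          ENNReal.div_le_div_right (mul_le_mul_right hKh _) _
      _ = ENNReal.ofReal ((ρ₁ ^ d)⁻¹) := by
          rw [hh1, ← ENNReal.ofReal_mul ht.le]
          have e1 : t * (1 / t) = 1 := by field_simp
          rw [e1, ENNReal.ofReal_one, one_div,
            ← ENNReal.ofReal_inv_of_pos (by positivity : (0:ℝ) < ρ₁ ^ d)]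
  have hlo : ENNReal.ofReal ((ρ₁ ^ d)⁻¹) ≤ ENNReal.ofReal t * Gfun d ν ρ₃ :=
    endpoint hν_meas hν_mono hH hd ht hρ₃pos h31 hh3 hh1
  have hcont : ContinuousOn (fun r => ENNReal.ofReal t * Gfun d ν r) (Icc ρ₃ ρ₁) :=
    (ENNReal.continuous_const_mul ENNReal.ofReal_ne_top).comp_continuousOn
      (Gfun_continuousOn hν_meas hν_mono hH hd hρ₃pos)
  obtain ⟨r0, hr0mem, hr0eq⟩ := intermediate_value_Icc' h31.le hcont ⟨hup, hlo⟩
  have hr0pos : 0 < r0 := lt_of_lt_of_le hρ₃pos hr0mem.1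
  have hnb : ∀ M : ℝ≥0∞, M ≠ ⊤ → ¬ (∀ r : ℝ, 0 < r → hfun d ν r ≤ M) := by
    intro M hM hbd
    have hu : (0:ℝ) < M.toReal + 1 := by positivity
    have h2' := hbd _ (hinv_pos _ hu)
    rw [hinv_eq _ hu] at h2'
    have hlt : M < ENNReal.ofReal (M.toReal + 1) := by
      rw [ENNReal.lt_ofReal_iff_toReal_lt hM]
      linarith
    exact absurd h2' (not_le.2 hlt)
  refine ⟨r0, ⟨hr0pos, ?_, hr0mem⟩, ?_⟩
  · rw [hident r0 hr0pos]; exact hr0eq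
  · intro r hr hreq
    rw [hident r hr] at hreq
    have hGeq : Gfun d ν r = Gfun d ν r0 := by
      have h := hreq.trans hr0eq.symm
      have h2 := congrArg (fun z => (ENNReal.ofReal t)⁻¹ * z) h
      simpa [← mul_assoc, ENNReal.inv_mul_cancel (ne_of_gt (ENNReal.ofReal_pos.2 ht))
        ENNReal.ofReal_ne_top, one_mul] using h2
    rcases lt_trichotomy r r0 with hlt | heq | hgt
    · obtain ⟨M, hM, hbd⟩ := rigid hν_meas hν_mono hH hd hr hlt hGeq
      exact absurd hbd (hnb M hM)
    · exact heq
    · obtain ⟨M, hM, hbd⟩ := rigid hν_meas hν_mono hH hd hr0pos hgt hGeq.symm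
      exact absurd hbd (hnb M hM)
end

section
/- For all β, γ ≥ 0 and θ, η ∈ ℝ with β/2 + 1 - θ > 0 and γ/2 + 1 - η > 0, and all t > 0: ∫_0^t u^{-η} [h^{-1}(1/u)]^γ (t-u)^{-θ} [h^{-1}(1/(t-u))]^β du ≤ B(β/2 + 1 - θ, γ/2 + 1 - η) · t^{1-η-θ} [h^{-1}(1/t)]^{γ+β}, where B is the Beta function. -/
open MeasureTheory Filter Set

noncomputable def betaFn (a b : ℝ) : ℝ :=
  Real.Gamma a * Real.Gamma b / Real.Gamma (a + b)

lemma aux_integrable {a b t : ℝ} (ha : 0 < a) (hb : 0 < b) (ht : 0 < t) :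
    IntegrableOn (fun u : ℝ => u ^ (a - 1) * (t - u) ^ (b - 1)) (Set.Ioo 0 t) := by
  have h1 : IntervalIntegrable (fun u : ℝ => u ^ (a - 1) * (t - u) ^ (b - 1))
      volume 0 (t / 2) := by
    apply IntervalIntegrable.mul_continuousOn
    · exact intervalIntegral.intervalIntegrable_rpow' (by linarith)
    · apply ContinuousOn.rpow_const (by fun_prop)
      intro x hx
      rw [Set.uIcc_of_le (by linarith)] at hx
      left
      have := hx.2
      intro hc; nlinarith
  have h2 : IntervalIntegrable (fun u : ℝ => u ^ (a - 1) * (t - u) ^ (b - 1))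
      volume (t / 2) t := by
    apply IntervalIntegrable.continuousOn_mul
    · have hI := (intervalIntegral.intervalIntegrable_rpow' (r := b - 1)
        (by linarith) (a := 0) (b := t / 2)).comp_sub_left t
      simpa [sub_half] using hI.symm
    · apply ContinuousOn.rpow_const (by fun_prop)
      intro x hx
      rw [Set.uIcc_of_le (by linarith)] at hx
      left
      have := hx.1
      intro hc; nlinarith
  have h3 := h1.trans h2
  have h4 := (intervalIntegrable_iff_integrableOn_Ioc_of_le ht.le).mp h3
  exact h4.mono_set Set.Ioo_subset_Ioc_self

lemma aux_beta {a b t : ℝ} (ha : 0 < a) (hb : 0 < b) (ht : 0 < t) :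
    ∫ u in Set.Ioo 0 t, u ^ (a - 1) * (t - u) ^ (b - 1)
      = t ^ (a + b - 1) * betaFn a b := by
  have hscaled := Complex.betaIntegral_scaled (a : ℂ) (b : ℂ) ht
  have hGab : Complex.Gamma ((a : ℂ) + b) ≠ 0 := by
    rw [show ((a : ℂ) + b) = ((a + b : ℝ) : ℂ) by push_cast; ring, Complex.Gamma_ofReal]
    exact_mod_cast (Real.Gamma_pos_of_pos (by linarith)).ne'
  have hbeta : Complex.betaIntegral (a : ℂ) (b : ℂ) = ((betaFn a b : ℝ) : ℂ) := by
    have hG := Complex.Gamma_mul_Gamma_eq_betaIntegral (s := (a : ℂ)) (t := (b : ℂ))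
      (by simpa using ha) (by simpa using hb)
    have hB : Complex.betaIntegral (a : ℂ) (b : ℂ)
        = Complex.Gamma (a : ℂ) * Complex.Gamma (b : ℂ) / Complex.Gamma ((a : ℂ) + b) :=
      (eq_div_iff hGab).mpr (by rw [hG]; ring)
    rw [hB, show ((a : ℂ) + b) = ((a + b : ℝ) : ℂ) by push_cast; ring,
      Complex.Gamma_ofReal, Complex.Gamma_ofReal, Complex.Gamma_ofReal, betaFn]
    push_cast
    ring
  have hre : ((∫ u in (0 : ℝ)..t, u ^ (a - 1) * (t - u) ^ (b - 1) : ℝ) : ℂ)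
      = ∫ u in (0 : ℝ)..t, (u : ℂ) ^ ((a : ℂ) - 1) * ((t : ℂ) - u) ^ ((b : ℂ) - 1) := by
    rw [← intervalIntegral.integral_ofReal]
    refine intervalIntegral.integral_congr fun x hx => ?_
    rw [Set.uIcc_of_le ht.le] at hx
    rw [Complex.ofReal_mul, Complex.ofReal_cpow hx.1, Complex.ofReal_cpow (by linarith [hx.2])]
    push_cast
    ring
  have hcast : ((t ^ (a + b - 1) * betaFn a b : ℝ) : ℂ)
      = (t : ℂ) ^ ((a : ℂ) + b - 1) * Complex.betaIntegral (a : ℂ) (b : ℂ) := by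
    rw [Complex.ofReal_mul, Complex.ofReal_cpow ht.le, hbeta]
    push_cast
    ring_nf
  have key : ((∫ u in (0 : ℝ)..t, u ^ (a - 1) * (t - u) ^ (b - 1) : ℝ) : ℂ)
      = ((t ^ (a + b - 1) * betaFn a b : ℝ) : ℂ) := by
    rw [hre, hscaled, hcast]
  have key' := Complex.ofReal_injective key
  rw [← key', intervalIntegral.integral_of_le ht.le, MeasureTheory.integral_Ioc_eq_integral_Ioo]

lemma aux_key (h hinv : ℝ → ℝ)
    (h_anti : StrictAntiOn h (Set.Ioi 0))
    (h_scal : ∀ lam r : ℝ, 0 < lam → lam ≤ 1 → 0 < r →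
      lam ^ 2 * h (lam * r) ≤ h r)
    (hinv_pos : ∀ u : ℝ, 0 < u → 0 < hinv u)
    (hinv_eq : ∀ u : ℝ, 0 < u → h (hinv u) = u)
    {u t : ℝ} (hu : 0 < u) (hut : u ≤ t) :
    hinv (1 / u) ≤ (u / t) ^ ((1 : ℝ) / 2) * hinv (1 / t) := by
  have ht : 0 < t := lt_of_lt_of_le hu hut
  set s : ℝ := (u / t) ^ ((1 : ℝ) / 2) with hs
  have hs_pos : 0 < s := Real.rpow_pos_of_pos (by positivity) _
  have hs_le : s ≤ 1 := by
    apply Real.rpow_le_one (by positivity) (by rw [div_le_one ht]; exact hut)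
    norm_num
  have hr : 0 < hinv (1 / t) := hinv_pos _ (by positivity)
  have hs2 : s ^ 2 = u / t := by
    rw [hs, ← Real.rpow_natCast ((u / t) ^ ((1 : ℝ) / 2)) 2, ← Real.rpow_mul (by positivity)]
    norm_num
  have hkey := h_scal s (hinv (1 / t)) hs_pos hs_le hr
  rw [hinv_eq _ (by positivity), hs2] at hkey
  have hle : h (s * hinv (1 / t)) ≤ 1 / u := by
    have h2 : u / t * h (s * hinv (1 / t)) ≤ 1 / t := hkey
    have h3 : h (s * hinv (1 / t)) ≤ (1 / t) / (u / t) := by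
      rw [le_div_iff₀ (by positivity)]
      linarith [h2, mul_comm (u / t) (h (s * hinv (1 / t)))]
    have h4 : (1 / t) / (u / t) = 1 / u := by field_simp
    linarith [h3, h4.symm.le]
  by_contra hlt
  push_neg at hlt
  have := h_anti (Set.mem_Ioi.mpr (by positivity)) (Set.mem_Ioi.mpr (hinv_pos _ (by positivity))) hlt
  rw [hinv_eq _ (by positivity)] at this
  linarith

theorem stmt16 (h hinv : ℝ → ℝ)
    (h_cont : ContinuousOn h (Set.Ioi 0))
    (h_anti : StrictAntiOn h (Set.Ioi 0))
    (h_lim0 : Tendsto h (nhdsWithin 0 (Set.Ioi 0)) atTop)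
    (h_limtop : Tendsto h atTop (nhds 0))
    (h_scal : ∀ lam r : ℝ, 0 < lam → lam ≤ 1 → 0 < r →
      lam ^ 2 * h (lam * r) ≤ h r)
    (hinv_pos : ∀ u : ℝ, 0 < u → 0 < hinv u)
    (hinv_eq : ∀ u : ℝ, 0 < u → h (hinv u) = u) :
    ∀ β γ θ η t : ℝ, 0 ≤ β → 0 ≤ γ →
      0 < β / 2 + 1 - θ → 0 < γ / 2 + 1 - η → 0 < t →
      (∫ u in Set.Ioo 0 t,
          u ^ (-η) * hinv (1 / u) ^ γ * (t - u) ^ (-θ) * hinv (1 / (t - u)) ^ β)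
        ≤ betaFn (β / 2 + 1 - θ) (γ / 2 + 1 - η) * t ^ (1 - η - θ) *
            hinv (1 / t) ^ (γ + β) := by
  intro β γ θ η t hβ hγ hb ha ht
  set a : ℝ := γ / 2 + 1 - η with ha_def
  set b : ℝ := β / 2 + 1 - θ with hb_def
  set C : ℝ := t ^ (-((γ + β) / 2)) * hinv (1 / t) ^ (γ + β) with hC_def
  have hrpos : 0 < hinv (1 / t) := hinv_pos _ (by positivity)
  have hCpos : 0 < C := by positivity
  -- the bounding function
  have hg_int : IntegrableOn (fun u : ℝ => C * (u ^ (a - 1) * (t - u) ^ (b - 1)))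
      (Set.Ioo 0 t) := (aux_integrable ha hb ht).const_mul C
  have hbound : ∀ u ∈ Set.Ioo 0 t,
      u ^ (-η) * hinv (1 / u) ^ γ * (t - u) ^ (-θ) * hinv (1 / (t - u)) ^ β
        ≤ C * (u ^ (a - 1) * (t - u) ^ (b - 1)) := by
    intro u hu
    obtain ⟨hu0, hut⟩ := hu
    have htu : 0 < t - u := by linarith
    have hk1 : hinv (1 / u) ≤ (u / t) ^ ((1 : ℝ) / 2) * hinv (1 / t) :=
      aux_key h hinv h_anti h_scal hinv_pos hinv_eq hu0 hut.le
    have hk2 : hinv (1 / (t - u)) ≤ ((t - u) / t) ^ ((1 : ℝ) / 2) * hinv (1 / t) :=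
      aux_key h hinv h_anti h_scal hinv_pos hinv_eq htu (by linarith)
    have hp1 : hinv (1 / u) ^ γ ≤ ((u / t) ^ ((1 : ℝ) / 2) * hinv (1 / t)) ^ γ :=
      Real.rpow_le_rpow (hinv_pos _ (by positivity)).le hk1 hγ
    have hp2 : hinv (1 / (t - u)) ^ β ≤ (((t - u) / t) ^ ((1 : ℝ) / 2) * hinv (1 / t)) ^ β :=
      Real.rpow_le_rpow (hinv_pos _ (by positivity)).le hk2 hβ
    have step1 : u ^ (-η) * hinv (1 / u) ^ γ * (t - u) ^ (-θ) * hinv (1 / (t - u)) ^ β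
        ≤ u ^ (-η) * ((u / t) ^ ((1 : ℝ) / 2) * hinv (1 / t)) ^ γ * (t - u) ^ (-θ) *
          (((t - u) / t) ^ ((1 : ℝ) / 2) * hinv (1 / t)) ^ β := by
      have h1 : (0:ℝ) ≤ u ^ (-η) := (Real.rpow_pos_of_pos hu0 _).le
      have h2 : (0:ℝ) ≤ (t - u) ^ (-θ) := (Real.rpow_pos_of_pos htu _).le
      gcongr
      exact Real.rpow_nonneg (hinv_pos _ (by positivity)).le β
    refine step1.trans_eq ?_
    have e1 : ((u / t) ^ ((1 : ℝ) / 2) * hinv (1 / t)) ^ γ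
        = (u / t) ^ (γ / 2) * hinv (1 / t) ^ γ := by
      rw [Real.mul_rpow (by positivity) hrpos.le, ← Real.rpow_mul (by positivity),
        one_div, inv_mul_eq_div]
    have e2 : (((t - u) / t) ^ ((1 : ℝ) / 2) * hinv (1 / t)) ^ β
        = ((t - u) / t) ^ (β / 2) * hinv (1 / t) ^ β := by
      rw [Real.mul_rpow (by positivity) hrpos.le, ← Real.rpow_mul (by positivity),
        one_div, inv_mul_eq_div]
    have m1 : u ^ (a - 1) = u ^ (-η) * u ^ (γ / 2) := by
      rw [← Real.rpow_add hu0]; congr 1; rw [ha_def]; ring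
    have m2 : (t - u) ^ (b - 1) = (t - u) ^ (-θ) * (t - u) ^ (β / 2) := by
      rw [← Real.rpow_add htu]; congr 1; rw [hb_def]; ring
    have m3 : hinv (1 / t) ^ (γ + β) = hinv (1 / t) ^ γ * hinv (1 / t) ^ β := by
      rw [← Real.rpow_add hrpos]
    have m4 : t ^ (-((γ + β) / 2)) = (t ^ (γ / 2))⁻¹ * (t ^ (β / 2))⁻¹ := by
      rw [← Real.rpow_neg ht.le, ← Real.rpow_neg ht.le, ← Real.rpow_add ht]; congr 1; ring
    rw [e1, e2, Real.div_rpow hu0.le ht.le, Real.div_rpow htu.le ht.le, hC_def,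
      m1, m2, m3, m4, div_eq_mul_inv, div_eq_mul_inv]
    ring
  have hnonneg : ∀ u ∈ Set.Ioo (0:ℝ) t,
      0 ≤ u ^ (-η) * hinv (1 / u) ^ γ * (t - u) ^ (-θ) * hinv (1 / (t - u)) ^ β := by
    intro u hu
    obtain ⟨hu0, hut⟩ := hu
    have htu : 0 < t - u := by linarith
    have := hinv_pos (1 / u) (by positivity)
    have := hinv_pos (1 / (t - u)) (by positivity)
    positivity
  have hmono : (∫ u in Set.Ioo 0 t,
      u ^ (-η) * hinv (1 / u) ^ γ * (t - u) ^ (-θ) * hinv (1 / (t - u)) ^ β)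
      ≤ ∫ u in Set.Ioo 0 t, C * (u ^ (a - 1) * (t - u) ^ (b - 1)) := by
    apply integral_mono_of_nonneg
    · filter_upwards [ae_restrict_mem measurableSet_Ioo] with u hu using hnonneg u hu
    · exact hg_int
    · filter_upwards [ae_restrict_mem measurableSet_Ioo] with u hu using hbound u hu
  refine hmono.trans ?_
  rw [integral_const_mul, aux_beta ha hb ht]
  have hsym : betaFn a b = betaFn b a := by
    rw [betaFn, betaFn, mul_comm (Real.Gamma a), add_comm a b]
  rw [hsym, hC_def]
  have hab : t ^ (-((γ + β) / 2)) * t ^ (a + b - 1) = t ^ (1 - η - θ) := by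
    rw [← Real.rpow_add ht]; congr 1; rw [ha_def, hb_def]; ring
  apply le_of_eq
  rw [← hab]
  ring
end
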